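/- arXiv:2008.04111 — 7 statements merged into one kernel-verified Lean document; each statement's English description precedes it below -/
import Mathlib

section
/- Fix positive real numbers μ and ν. Let I = (a,b) be an open interval of length greater than 2μ/ν, and let f be a C¹ function on I such that at each point x ∈ I, either |f(x)| > μ or |f'(x)| > ν. Then for each root x₀ of f in I with x₀ - a > μ/ν and b - x₀ > μ/ν, there exists an interval (a', b') with x₀ ∈ (a', b') ⊆ (x₀ - μ/ν, x₀ + μ/ν), f(a')·f(b') < 0, and |f(a')| = |f(b')| = μ. Moreover, the intervals associated to distinct such roots are pairwise disjoint. -/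
/-!
On any interval where `|f| ≤ μ`, the hypothesis forces `|f'| > ν`; by Darboux's theorem `f'`
then has constant sign, so `f` is injective there and changes at rate at least `ν`.
Walking right and left from a root `x₀`, `|f|` therefore reaches `μ` within distance `μ/ν`; the
first such points `a' < x₀ < b'` bound a window on which `|f| ≤ μ`. Injectivity on the window
gives `f a' ≠ f b'`, hence `f a' = -f b'`. Two overlapping windows would form one interval
with `|f| ≤ μ` containing two distinct roots, contradicting injectivity.
-/

open Set

lemma Convex.mul_abs_sub_le_abs_image_sub {f : ℝ → ℝ} {s : Set ℝ} {ν : ℝ} (hs : Convex ℝ s)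
    (hf : ∀ x ∈ s, DifferentiableAt ℝ f x) (hν : 0 ≤ ν) (hf' : ∀ x ∈ s, ν < |deriv f x|) :
    ∀ x ∈ s, ∀ y ∈ s, ν * |y - x| ≤ |f y - f x| := by
  have hcont : ContinuousOn f s := fun x hx => (hf x hx).continuousAt.continuousWithinAt
  have hdiff : DifferentiableOn ℝ f (interior s) := fun x hx =>
    (hf x (interior_subset hx)).differentiableWithinAt
  have hne : ∀ x ∈ s, deriv f x ≠ 0 := fun x hx h => by
    have := hf' x hx
    rw [h, abs_zero] at this
    linarith
  suffices key : ∀ x ∈ s, ∀ y ∈ s, x ≤ y → ν * (y - x) ≤ |f y - f x| by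
    intro x hx y hy
    rcases le_total x y with hxy | hyx
    · rw [abs_of_nonneg (sub_nonneg.2 hxy)]
      exact key x hx y hy hxy
    · rw [abs_sub_comm, abs_of_nonneg (sub_nonneg.2 hyx), abs_sub_comm]
      exact key y hy x hx hyx
  intro x hx y hy hxy
  rcases hasDerivWithinAt_forall_lt_or_forall_gt_of_forall_ne hs
    (fun z hz => (hf z hz).hasDerivAt.hasDerivWithinAt) hne with hneg | hpos
  · have hle : ∀ z ∈ interior s, deriv f z ≤ -ν := fun z hz => by
      have := hf' z (interior_subset hz)
      rw [abs_of_neg (hneg z (interior_subset hz))] at this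
      linarith
    have := hs.image_sub_le_mul_sub_of_deriv_le hcont hdiff hle x hx y hy hxy
    linarith [neg_abs_le (f y - f x)]
  · have hge : ∀ z ∈ interior s, ν ≤ deriv f z := fun z hz => by
      have := hf' z (interior_subset hz)
      rw [abs_of_pos (hpos z (interior_subset hz))] at this
      exact this.le
    exact (hs.mul_sub_le_image_sub_of_le_deriv hcont hdiff hge x hx y hy hxy).trans
      (le_abs_self _)

lemma ContinuousOn.exists_first_eq_of_lt {g : ℝ → ℝ} {x y m : ℝ} (hg : ContinuousOn g (Icc x y))
    (hx : g x < m) (hy : ∃ z ∈ Icc x y, m ≤ g z) :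
    ∃ d ∈ Ioc x y, g d = m ∧ ∀ z ∈ Icc x d, g z ≤ m := by
  set S := Icc x y ∩ g ⁻¹' Ici m
  have hne : S.Nonempty := hy
  have hbdd : BddBelow S := ⟨x, fun z hz => hz.1.1⟩
  have hdS : sInf S ∈ S :=
    (hg.preimage_isClosed_of_isClosed isClosed_Icc isClosed_Ici).csInf_mem hne hbdd
  have hxd : x < sInf S := (le_csInf hne fun z hz => hz.1.1).lt_of_ne fun h =>
    (h ▸ hdS.2 : m ≤ g x).not_gt hx
  have hbelow : ∀ z ∈ Ico x (sInf S), g z < m := fun z hz =>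
    not_le.1 fun hmz => notMem_of_lt_csInf hz.2 hbdd ⟨⟨hz.1, hz.2.le.trans hdS.1.2⟩, hmz⟩
  have hgd : g (sInf S) = m := by
    obtain ⟨w, hw, hgw⟩ := intermediate_value_Icc hxd.le (hg.mono (Icc_subset_Icc_right hdS.1.2))
      ⟨hx.le, hdS.2⟩
    rcases hw.2.eq_or_lt with rfl | hlt
    · exact hgw
    · exact absurd hgw (hbelow w ⟨hw.1, hlt⟩).ne
  refine ⟨sInf S, ⟨hxd, hdS.1.2⟩, hgd, fun z hz => ?_⟩
  rcases hz.2.eq_or_lt with rfl | hlt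
  · exact hgd.le
  · exact (hbelow z ⟨hz.1, hlt⟩).le

lemma ContinuousOn.exists_last_eq_of_lt {g : ℝ → ℝ} {x y m : ℝ} (hg : ContinuousOn g (Icc x y))
    (hy : g y < m) (hx : ∃ z ∈ Icc x y, m ≤ g z) :
    ∃ c ∈ Ico x y, g c = m ∧ ∀ z ∈ Icc c y, g z ≤ m := by
  have hmaps : MapsTo Neg.neg (Icc (-y) (-x)) (Icc x y) := fun z hz =>
    ⟨le_neg_of_le_neg hz.2, neg_le.1 hz.1⟩
  obtain ⟨z, hz, hmz⟩ := hx
  obtain ⟨d, hd, hgd, hle⟩ := (hg.comp continuousOn_neg hmaps).exists_first_eq_of_lt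
    (by simpa using hy) ⟨-z, ⟨neg_le_neg hz.2, neg_le_neg hz.1⟩, by simpa using hmz⟩
  refine ⟨-d, ⟨le_neg_of_le_neg hd.2, neg_lt.1 hd.1⟩, by simpa using hgd, fun w hw => ?_⟩
  simpa using hle (-w) ⟨neg_le_neg hw.2, neg_le.1 hw.1⟩

structure IsRootWindow (f : ℝ → ℝ) (μ r x₀ : ℝ) (p : ℝ × ℝ) : Prop where
  left_ge : x₀ - r ≤ p.1
  left_lt : p.1 < x₀
  lt_right : x₀ < p.2
  right_le : p.2 ≤ x₀ + r
  abs_left : |f p.1| = μ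
  abs_right : |f p.2| = μ
  abs_le : ∀ x ∈ Icc p.1 p.2, |f x| ≤ μ

section

variable {f : ℝ → ℝ} {μ ν a b : ℝ}

lemma injOn_of_abs_le (hdiff : DifferentiableOn ℝ f (Ioo a b))
    (halt : ∀ x ∈ Ioo a b, μ < |f x| ∨ ν < |deriv f x|) (hν : 0 < ν) {s : Set ℝ}
    (hs : Convex ℝ s) (hsub : s ⊆ Ioo a b) (hle : ∀ x ∈ s, |f x| ≤ μ) : InjOn f s := by
  have hgrow := hs.mul_abs_sub_le_abs_image_sub
    (fun x hx => hdiff.differentiableAt (isOpen_Ioo.mem_nhds (hsub hx))) hν.le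
    (fun x hx => (halt x (hsub hx)).resolve_left (hle x hx).not_gt)
  intro x hx y hy hxy
  by_contra hne
  have := hgrow x hx y hy
  rw [hxy, sub_self, abs_zero] at this
  exact (mul_pos hν (abs_pos.2 (sub_ne_zero.2 (Ne.symm hne)))).not_ge this

lemma exists_le_abs_of_root (hdiff : DifferentiableOn ℝ f (Ioo a b))
    (halt : ∀ x ∈ Ioo a b, μ < |f x| ∨ ν < |deriv f x|) (hν : 0 < ν) {x₀ y : ℝ}
    (hsub : uIcc x₀ y ⊆ Ioo a b) (h0 : f x₀ = 0) (hy : μ ≤ ν * |y - x₀|) :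
    ∃ z ∈ uIcc x₀ y, μ ≤ |f z| := by
  by_contra! hlt
  have hgrow := convex_uIcc x₀ y |>.mul_abs_sub_le_abs_image_sub
    (fun x hx => hdiff.differentiableAt (isOpen_Ioo.mem_nhds (hsub hx))) hν.le
    (fun x hx => (halt x (hsub hx)).resolve_left (hlt x hx).le.not_gt)
    x₀ left_mem_uIcc y right_mem_uIcc
  rw [h0, sub_zero] at hgrow
  linarith [hlt y right_mem_uIcc]

lemma exists_isRootWindow (hdiff : DifferentiableOn ℝ f (Ioo a b))
    (halt : ∀ x ∈ Ioo a b, μ < |f x| ∨ ν < |deriv f x|) (hμ : 0 < μ) (hν : 0 < ν) {x₀ : ℝ}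
    (hsub : Icc (x₀ - μ / ν) (x₀ + μ / ν) ⊆ Ioo a b) (h0 : f x₀ = 0) :
    ∃ p, IsRootWindow f μ (μ / ν) x₀ p := by
  have hr : 0 < μ / ν := div_pos hμ hν
  have hνr : ν * (μ / ν) = μ := mul_div_cancel₀ μ hν.ne'
  have hcont : ContinuousOn (fun x => |f x|) (Icc (x₀ - μ / ν) (x₀ + μ / ν)) :=
    (hdiff.continuousOn.mono hsub).abs
  have hf0 : |f x₀| < μ := by rwa [h0, abs_zero]
  have hR : uIcc x₀ (x₀ + μ / ν) = Icc x₀ (x₀ + μ / ν) := uIcc_of_le (by linarith)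
  have hL : uIcc x₀ (x₀ - μ / ν) = Icc (x₀ - μ / ν) x₀ := uIcc_of_ge (by linarith)
  have hRsub : Icc x₀ (x₀ + μ / ν) ⊆ Icc (x₀ - μ / ν) (x₀ + μ / ν) :=
    Icc_subset_Icc_left (by linarith)
  have hLsub : Icc (x₀ - μ / ν) x₀ ⊆ Icc (x₀ - μ / ν) (x₀ + μ / ν) :=
    Icc_subset_Icc_right (by linarith)
  have hright : ∃ z ∈ Icc x₀ (x₀ + μ / ν), μ ≤ |f z| :=
    hR ▸ exists_le_abs_of_root hdiff halt hν (hR ▸ hRsub.trans hsub) h0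
      (by rw [add_sub_cancel_left, abs_of_pos hr, hνr])
  have hleft : ∃ z ∈ Icc (x₀ - μ / ν) x₀, μ ≤ |f z| :=
    hL ▸ exists_le_abs_of_root hdiff halt hν (hL ▸ hLsub.trans hsub) h0
      (by rw [sub_sub_cancel_left, abs_neg, abs_of_pos hr, hνr])
  obtain ⟨d, hd, hfd, hled⟩ := (hcont.mono hRsub).exists_first_eq_of_lt hf0 hright
  obtain ⟨c, hc, hfc, hlec⟩ := (hcont.mono hLsub).exists_last_eq_of_lt hf0 hleft
  refine ⟨(c, d), hc.1, hc.2, hd.1, hd.2, hfc, hfd, fun x hx => ?_⟩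
  rcases le_total x x₀ with hx₀ | hx₀
  · exact hlec x ⟨hx.1, hx₀⟩
  · exact hled x ⟨hx₀, hx.2⟩

namespace IsRootWindow

variable {r x₀ : ℝ} {p : ℝ × ℝ}

lemma Icc_subset (w : IsRootWindow f μ r x₀ p) : Icc p.1 p.2 ⊆ Icc (x₀ - r) (x₀ + r) :=
  Icc_subset_Icc w.left_ge w.right_le

lemma mul_neg (w : IsRootWindow f μ r x₀ p) (hdiff : DifferentiableOn ℝ f (Ioo a b))
    (halt : ∀ x ∈ Ioo a b, μ < |f x| ∨ ν < |deriv f x|) (hμ : 0 < μ) (hν : 0 < ν)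
    (hsub : Icc (x₀ - r) (x₀ + r) ⊆ Ioo a b) : f p.1 * f p.2 < 0 := by
  have hlt : p.1 < p.2 := w.left_lt.trans w.lt_right
  have hne : f p.1 ≠ f p.2 := fun h => hlt.ne <|
    injOn_of_abs_le hdiff halt hν (convex_Icc _ _) (w.Icc_subset.trans hsub) w.abs_le
      (left_mem_Icc.2 hlt.le) (right_mem_Icc.2 hlt.le) h
  have hopp : f p.1 = -f p.2 :=
    (abs_eq_abs.1 (w.abs_left.trans w.abs_right.symm)).resolve_left hne
  have hpos : 0 < f p.2 * f p.2 := mul_self_pos.2 fun h => by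
    have := w.abs_right
    rw [h, abs_zero] at this
    exact hμ.ne this
  rw [hopp, neg_mul]
  exact neg_neg_of_pos hpos

lemma disjoint {y₀ : ℝ} {q : ℝ × ℝ} (w : IsRootWindow f μ r x₀ p)
    (hdiff : DifferentiableOn ℝ f (Ioo a b))
    (halt : ∀ x ∈ Ioo a b, μ < |f x| ∨ ν < |deriv f x|) (hν : 0 < ν)
    (w' : IsRootWindow f μ r y₀ q) (hx₀ : Icc (x₀ - r) (x₀ + r) ⊆ Ioo a b)
    (hy₀ : Icc (y₀ - r) (y₀ + r) ⊆ Ioo a b) (hxy : f x₀ = f y₀) (hne : x₀ ≠ y₀) :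
    Disjoint (Ioo p.1 p.2) (Ioo q.1 q.2) := by
  refine Set.disjoint_left.2 fun z hzp hzq => hne ?_
  have hconv : Convex ℝ (Icc p.1 p.2 ∪ Icc q.1 q.2) :=
    (isPreconnected_Icc.union z (Ioo_subset_Icc_self hzp) (Ioo_subset_Icc_self hzq)
      isPreconnected_Icc).convex
  refine injOn_of_abs_le hdiff halt hν hconv
    (union_subset (w.Icc_subset.trans hx₀) (w'.Icc_subset.trans hy₀)) ?_
    (Or.inl ⟨w.left_lt.le, w.lt_right.le⟩) (Or.inr ⟨w'.left_lt.le, w'.lt_right.le⟩) hxy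
  rintro x (hx | hx)
  exacts [w.abs_le x hx, w'.abs_le x hx]

end IsRootWindow

end

theorem stmt1_general (μ ν a b : ℝ) (hμ : 0 < μ) (hν : 0 < ν)
    (f : ℝ → ℝ) (hf : ContDiffOn ℝ 1 f (Set.Ioo a b))
    (halt : ∀ x ∈ Set.Ioo a b, μ < |f x| ∨ ν < |deriv f x|) :
    ∃ I : ℝ → ℝ × ℝ,
      (∀ x₀ ∈ Set.Ioo a b, f x₀ = 0 → μ / ν < x₀ - a → μ / ν < b - x₀ →
        x₀ ∈ Set.Ioo (I x₀).1 (I x₀).2 ∧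
        Set.Ioo (I x₀).1 (I x₀).2 ⊆ Set.Ioo (x₀ - μ / ν) (x₀ + μ / ν) ∧
        f (I x₀).1 * f (I x₀).2 < 0 ∧ |f (I x₀).1| = μ ∧ |f (I x₀).2| = μ) ∧
      (∀ x₀ ∈ Set.Ioo a b, ∀ y₀ ∈ Set.Ioo a b,
        f x₀ = 0 → μ / ν < x₀ - a → μ / ν < b - x₀ →
        f y₀ = 0 → μ / ν < y₀ - a → μ / ν < b - y₀ → x₀ ≠ y₀ →
        Disjoint (Set.Ioo (I x₀).1 (I x₀).2) (Set.Ioo (I y₀).1 (I y₀).2)) := by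
  have hdiff : DifferentiableOn ℝ f (Ioo a b) := hf.differentiableOn one_ne_zero
  have hsub : ∀ x₀, μ / ν < x₀ - a → μ / ν < b - x₀ →
      Icc (x₀ - μ / ν) (x₀ + μ / ν) ⊆ Ioo a b := fun x₀ hA hB =>
    Icc_subset_Ioo (by linarith) (by linarith)
  have hwindow : ∀ x₀, ∃ p, f x₀ = 0 → μ / ν < x₀ - a → μ / ν < b - x₀ →
      IsRootWindow f μ (μ / ν) x₀ p := by
    intro x₀
    by_cases h : f x₀ = 0 ∧ μ / ν < x₀ - a ∧ μ / ν < b - x₀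
    · obtain ⟨p, hp⟩ := exists_isRootWindow hdiff halt hμ hν (hsub x₀ h.2.1 h.2.2) h.1
      exact ⟨p, fun _ _ _ => hp⟩
    · exact ⟨(0, 0), fun h0 hA hB => absurd ⟨h0, hA, hB⟩ h⟩
  choose I hI using hwindow
  refine ⟨I, fun x₀ _ h0 hA hB => ?_, fun x₀ _ y₀ _ h0x hAx hBx h0y hAy hBy hne => ?_⟩
  · have w := hI x₀ h0 hA hB
    exact ⟨⟨w.left_lt, w.lt_right⟩, Ioo_subset_Ioo w.left_ge w.right_le,
      w.mul_neg hdiff halt hμ hν (hsub x₀ hA hB), w.abs_left, w.abs_right⟩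
  · exact (hI x₀ h0x hAx hBx).disjoint hdiff halt hν (hI y₀ h0y hAy hBy) (hsub x₀ hAx hBx)
      (hsub y₀ hAy hBy) (h0x.trans h0y.symm) hne

/-- Separation lemma: for a C¹ function `f` on `(a,b)` such that at each point either
`|f| > μ` or `|f'| > ν`, every root `x₀` that is `μ/ν`-away from the endpoints has an
associated interval `(a', b')` with `x₀ ∈ (a',b') ⊆ (x₀ - μ/ν, x₀ + μ/ν)`,
`f(a')f(b') < 0`, `|f(a')| = |f(b')| = μ`, and the intervals of distinct roots are disjoint. -/
theorem stmt1 (μ ν a b : ℝ) (hμ : 0 < μ) (hν : 0 < ν) (hlen : b - a > 2 * μ / ν)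
    (f : ℝ → ℝ) (hf : ContDiffOn ℝ 1 f (Set.Ioo a b))
    (halt : ∀ x ∈ Set.Ioo a b, μ < |f x| ∨ ν < |deriv f x|) :
    ∃ I : ℝ → ℝ × ℝ,
      (∀ x₀ ∈ Set.Ioo a b, f x₀ = 0 → μ / ν < x₀ - a → μ / ν < b - x₀ →
        x₀ ∈ Set.Ioo (I x₀).1 (I x₀).2 ∧
        Set.Ioo (I x₀).1 (I x₀).2 ⊆ Set.Ioo (x₀ - μ / ν) (x₀ + μ / ν) ∧
        f (I x₀).1 * f (I x₀).2 < 0 ∧ |f (I x₀).1| = μ ∧ |f (I x₀).2| = μ) ∧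
      (∀ x₀ ∈ Set.Ioo a b, ∀ y₀ ∈ Set.Ioo a b,
        f x₀ = 0 → μ / ν < x₀ - a → μ / ν < b - x₀ →
        f y₀ = 0 → μ / ν < y₀ - a → μ / ν < b - y₀ → x₀ ≠ y₀ →
        Disjoint (Set.Ioo (I x₀).1 (I x₀).2) (Set.Ioo (I y₀).1 (I y₀).2)) :=
  stmt1_general μ ν a b hμ hν f hf halt
end

section
/- Fix positive real numbers μ and ν. Let I = (a,b) be an interval of length at least 2μ/ν, and let f be a C¹ function on I such that at each point x ∈ I, either |f(x)| > μ or |f'(x)| > ν. Let g be a function on I with |g(x)| < μ for all x ∈ I. Then for each root x₀ of f in I with x₀ - a > μ/ν and b - x₀ > μ/ν, the function f + g has a root in the interval (x₀ - μ/ν, x₀ + μ/ν); moreover, distinct such roots of f yield distinct roots of f + g. -/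
/-!
Near a root `x₀` of `f` we have `|f| < μ`, hence `|f'| > ν`. By Darboux, `f'` keeps its sign as
long as `|f| < μ`, so on either side of `x₀` the function `|f|` grows at rate `> ν` and reaches `μ`,
with opposite signs on the two sides, within distance `μ / ν`. As `|g| < μ`, `f + g` changes sign
between these two exit points. If two such windows share a root of `f + g`, their union is an
interval on which `|f| < μ`, so `f'` does not vanish there and, by Rolle, `f` has only one root in it.
-/

open Set

section

variable {f g : ℝ → ℝ} {μ ν u c x₀ : ℝ}

theorem Set.OrdConnected.injOn_of_deriv_ne_zero {J : Set ℝ} (hJ : J.OrdConnected)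
    (hf : ContinuousOn f J) (hf' : ∀ x ∈ J, deriv f x ≠ 0) : InjOn f J := by
  suffices ∀ x ∈ J, ∀ y ∈ J, x < y → f x ≠ f y by
    intro x hx y hy hxy
    by_contra hne
    rcases lt_or_gt_of_ne hne with h | h
    exacts [this x hx y hy h hxy, this y hy x hx h hxy.symm]
  intro x hx y hy hxy hfxy
  obtain ⟨z, hz, hz0⟩ := exists_deriv_eq_zero hxy (hf.mono (hJ.out hx hy)) hfxy
  exact hf' z (hJ.out hx hy (Ioo_subset_Icc_self hz)) hz0

theorem deriv_ne_zero_of_abs_lt {x : ℝ} (hν : 0 ≤ ν) (halt : μ < |f x| ∨ ν < |deriv f x|)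
    (hfx : |f x| < μ) : deriv f x ≠ 0 :=
  abs_pos.mp <| hν.trans_lt <| halt.resolve_left hfx.not_gt

theorem mul_sub_lt_sub_of_lt_abs_deriv (hν : 0 ≤ ν) (huc : u < c)
    (hdiff : ∀ x ∈ Icc u c, DifferentiableAt ℝ f x) (hderiv : ∀ x ∈ Ico u c, ν < |deriv f x|)
    (hu : 0 < deriv f u) : ν * (c - u) < f c - f u := by
  have hpos : ∀ x ∈ Ico u c, 0 < deriv f x := by
    refine ((hasDerivWithinAt_forall_lt_or_forall_gt_of_forall_ne (convex_Ico u c)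
      (fun x hx => (hdiff x (Ico_subset_Icc_self hx)).hasDerivAt.hasDerivWithinAt)
      (fun x hx h0 => ?_)).resolve_left fun hneg => ?_)
    · exact (abs_pos.mp (hν.trans_lt (hderiv x hx))) h0
    · exact (hneg u ⟨le_rfl, huc⟩).not_gt hu
  refine (convex_Icc u c).mul_sub_lt_image_sub_of_lt_deriv
    (fun x hx => (hdiff x hx).continuousAt.continuousWithinAt)
    (fun x hx => (hdiff x (interior_subset hx)).differentiableWithinAt)
    (fun x hx => ?_) u ⟨le_rfl, huc.le⟩ c ⟨huc.le, le_rfl⟩ huc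
  rw [interior_Icc] at hx
  have := hderiv x (Ioo_subset_Ico_self hx)
  rwa [abs_of_pos (hpos x (Ioo_subset_Ico_self hx))] at this

theorem exists_exit_right (hμ : 0 < μ) (hν : 0 < ν)
    (hdiff : ∀ x ∈ Icc u (u + μ / ν), DifferentiableAt ℝ f x)
    (halt : ∀ x ∈ Icc u (u + μ / ν), μ < |f x| ∨ ν < |deriv f x|)
    (hfu : f u = 0) (hdu : 0 < deriv f u) :
    ∃ c ∈ Ioc u (u + μ / ν), μ ≤ f c ∧ ∀ x ∈ Ico u c, |f x| < μ := by
  have hδ : 0 < μ / ν := div_pos hμ hν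
  have growth : ∀ c ∈ Ioc u (u + μ / ν), (∀ x ∈ Ico u c, |f x| < μ) → ν * (c - u) < f c := by
    intro c hc hsmall
    have hsub : Icc u c ⊆ Icc u (u + μ / ν) := Icc_subset_Icc_right hc.2
    simpa [hfu] using mul_sub_lt_sub_of_lt_abs_deriv hν.le hc.1 (fun x hx => hdiff x (hsub hx))
      (fun x hx => (halt x (hsub (Ico_subset_Icc_self hx))).resolve_left (hsmall x hx).not_gt) hdu
  set T := Icc u (u + μ / ν) ∩ (fun x => |f x|) ⁻¹' Ici μ
  have hT : IsCompact T := isCompact_Icc.of_isClosed_subset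
    ((continuousOn_of_forall_continuousAt fun x hx => (hdiff x hx).continuousAt).abs
      |>.preimage_isClosed_of_isClosed isClosed_Icc isClosed_Ici) inter_subset_left
  have hTne : T.Nonempty := by
    by_contra hempty
    have hsmall : ∀ x ∈ Icc u (u + μ / ν), |f x| < μ := fun x hx =>
      not_le.mp fun h => hempty ⟨x, hx, h⟩
    have := growth (u + μ / ν) ⟨by linarith, le_rfl⟩ fun x hx => hsmall x (Ico_subset_Icc_self hx)
    rw [add_sub_cancel_left, mul_div_cancel₀ _ hν.ne'] at this
    linarith [le_abs_self (f (u + μ / ν)), hsmall _ ⟨by linarith, le_rfl⟩]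
  obtain ⟨c, ⟨hcI, hcμ⟩, hcmin⟩ := hT.exists_isLeast hTne
  have huc : u < c := hcI.1.lt_of_ne <| by
    rintro rfl
    simp only [mem_preimage, hfu, abs_zero, mem_Ici] at hcμ
    linarith
  have hsmall : ∀ x ∈ Ico u c, |f x| < μ := fun x hx =>
    not_le.mp fun h => (hcmin ⟨⟨hx.1, hx.2.le.trans hcI.2⟩, h⟩).not_gt hx.2
  have hfc : 0 < f c := lt_trans (by nlinarith) (growth c ⟨huc, hcI.2⟩ hsmall)
  exact ⟨c, ⟨huc, hcI.2⟩, by simpa [abs_of_pos hfc] using hcμ, hsmall⟩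

theorem exists_exit_left (hμ : 0 < μ) (hν : 0 < ν)
    (hdiff : ∀ x ∈ Icc (u - μ / ν) u, DifferentiableAt ℝ f x)
    (halt : ∀ x ∈ Icc (u - μ / ν) u, μ < |f x| ∨ ν < |deriv f x|)
    (hfu : f u = 0) (hdu : 0 < deriv f u) :
    ∃ d ∈ Ico (u - μ / ν) u, f d ≤ -μ ∧ ∀ x ∈ Ioc d u, |f x| < μ := by
  have hrefl : ∀ x ∈ Icc u (u + μ / ν), 2 * u - x ∈ Icc (u - μ / ν) u := fun x hx =>
    ⟨by linarith [hx.2], by linarith [hx.1]⟩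
  have hderiv : ∀ x, deriv (fun x => -f (2 * u - x)) x = deriv f (2 * u - x) := fun x => by
    simp [deriv_comp_const_sub]
  obtain ⟨c, hc, hfc, hsmall⟩ := exists_exit_right (f := fun x => -f (2 * u - x)) hμ hν
    (fun x hx => ((hdiff _ (hrefl x hx)).comp x ((differentiableAt_const _).sub
      differentiableAt_id)).neg)
    (fun x hx => by simpa [hderiv, abs_neg] using halt _ (hrefl x hx))
    (by simp [two_mul, hfu]) (by rwa [hderiv, two_mul, add_sub_cancel_right])
  refine ⟨2 * u - c, ⟨by linarith [hc.2], by linarith [hc.1]⟩, by linarith, fun x hx => ?_⟩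
  simpa using hsmall (2 * u - x) ⟨by linarith [hx.2], by linarith [hx.1]⟩

theorem exists_root_add_near_of_deriv_pos (hμ : 0 < μ) (hν : 0 < ν)
    (hdiff : ∀ x ∈ Icc (x₀ - μ / ν) (x₀ + μ / ν), DifferentiableAt ℝ f x)
    (halt : ∀ x ∈ Icc (x₀ - μ / ν) (x₀ + μ / ν), μ < |f x| ∨ ν < |deriv f x|)
    (hg : ContinuousOn g (Icc (x₀ - μ / ν) (x₀ + μ / ν)))
    (hgμ : ∀ x ∈ Icc (x₀ - μ / ν) (x₀ + μ / ν), |g x| < μ)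
    (hf₀ : f x₀ = 0) (hd₀ : 0 < deriv f x₀) :
    ∃ r d c, Ioo d c ⊆ Ioo (x₀ - μ / ν) (x₀ + μ / ν) ∧ x₀ ∈ Ioo d c ∧ r ∈ Ioo d c ∧
      (∀ x ∈ Ioo d c, |f x| < μ) ∧ f r + g r = 0 := by
  have hδ : 0 < μ / ν := div_pos hμ hν
  have hright : Icc x₀ (x₀ + μ / ν) ⊆ Icc (x₀ - μ / ν) (x₀ + μ / ν) :=
    Icc_subset_Icc_left (by linarith)
  have hleft : Icc (x₀ - μ / ν) x₀ ⊆ Icc (x₀ - μ / ν) (x₀ + μ / ν) :=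
    Icc_subset_Icc_right (by linarith)
  obtain ⟨c, hc, hfc, hsmallc⟩ := exists_exit_right hμ hν (fun x hx => hdiff x (hright hx))
    (fun x hx => halt x (hright hx)) hf₀ hd₀
  obtain ⟨d, hd, hfd, hsmalld⟩ := exists_exit_left hμ hν (fun x hx => hdiff x (hleft hx))
    (fun x hx => halt x (hleft hx)) hf₀ hd₀
  have hdc : Icc d c ⊆ Icc (x₀ - μ / ν) (x₀ + μ / ν) := Icc_subset_Icc hd.1 hc.2
  have hcontdc : ContinuousOn (fun x => f x + g x) (Icc d c) :=
    (continuousOn_of_forall_continuousAt fun x hx => (hdiff x (hdc hx)).continuousAt).add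
      (hg.mono hdc)
  have hgd := hgμ d (hdc ⟨le_rfl, (hd.2.trans hc.1).le⟩)
  have hgc := hgμ c (hdc ⟨(hd.2.trans hc.1).le, le_rfl⟩)
  obtain ⟨r, hr, hr0⟩ := intermediate_value_Ioo (hd.2.trans hc.1).le hcontdc
    (show (0 : ℝ) ∈ Ioo (f d + g d) (f c + g c) from
      ⟨by linarith [le_abs_self (g d)], by linarith [neg_abs_le (g c)]⟩)
  refine ⟨r, d, c, Ioo_subset_Ioo hd.1 hc.2, ⟨hd.2, hc.1⟩, hr, fun x hx => ?_, hr0⟩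
  rcases le_or_gt x x₀ with hx₀ | hx₀
  exacts [hsmalld x ⟨hx.1, hx₀⟩, hsmallc x ⟨hx₀.le, hx.2⟩]

theorem exists_root_add_near (hμ : 0 < μ) (hν : 0 < ν)
    (hdiff : ∀ x ∈ Icc (x₀ - μ / ν) (x₀ + μ / ν), DifferentiableAt ℝ f x)
    (halt : ∀ x ∈ Icc (x₀ - μ / ν) (x₀ + μ / ν), μ < |f x| ∨ ν < |deriv f x|)
    (hg : ContinuousOn g (Icc (x₀ - μ / ν) (x₀ + μ / ν)))
    (hgμ : ∀ x ∈ Icc (x₀ - μ / ν) (x₀ + μ / ν), |g x| < μ) (hf₀ : f x₀ = 0) :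
    ∃ r d c, Ioo d c ⊆ Ioo (x₀ - μ / ν) (x₀ + μ / ν) ∧ x₀ ∈ Ioo d c ∧ r ∈ Ioo d c ∧
      (∀ x ∈ Ioo d c, |f x| < μ) ∧ f r + g r = 0 := by
  have hδ : 0 < μ / ν := div_pos hμ hν
  have hd₀ : deriv f x₀ ≠ 0 :=
    deriv_ne_zero_of_abs_lt hν.le (halt x₀ ⟨by linarith, by linarith⟩) (by simpa [hf₀])
  rcases hd₀.lt_or_gt with hneg | hpos
  · obtain ⟨r, d, c, hdc, hx₀dc, hr, hsmall, hr0⟩ :=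
      exists_root_add_near_of_deriv_pos (f := -f) (g := -g) hμ hν
        (fun x hx => (hdiff x hx).neg) (fun x hx => by simpa [deriv.neg] using halt x hx)
        hg.neg (fun x hx => by simpa using hgμ x hx) (by simpa using hf₀)
        (by simpa [deriv.neg] using hneg)
    refine ⟨r, d, c, hdc, hx₀dc, hr, fun x hx => by simpa using hsmall x hx, ?_⟩
    simp only [Pi.neg_apply] at hr0
    linarith
  · exact exists_root_add_near_of_deriv_pos hμ hν hdiff halt hg hgμ hf₀ hpos

end

theorem stmt2_general (μ ν a b : ℝ) (hμ : 0 < μ) (hν : 0 < ν)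
    (f g : ℝ → ℝ) (hf : ContDiffOn ℝ 1 f (Set.Ioo a b))
    (hg : ContinuousOn g (Set.Ioo a b))
    (halt : ∀ x ∈ Set.Ioo a b, μ < |f x| ∨ ν < |deriv f x|)
    (hgsmall : ∀ x ∈ Set.Ioo a b, |g x| < μ) :
    ∃ r : ℝ → ℝ,
      (∀ x₀ ∈ Set.Ioo a b, f x₀ = 0 → μ / ν < x₀ - a → μ / ν < b - x₀ →
        r x₀ ∈ Set.Ioo (x₀ - μ / ν) (x₀ + μ / ν) ∧ f (r x₀) + g (r x₀) = 0) ∧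
      (∀ x₀ ∈ Set.Ioo a b, ∀ y₀ ∈ Set.Ioo a b,
        f x₀ = 0 → μ / ν < x₀ - a → μ / ν < b - x₀ →
        f y₀ = 0 → μ / ν < y₀ - a → μ / ν < b - y₀ → x₀ ≠ y₀ → r x₀ ≠ r y₀) := by
  have hdiff : ∀ x ∈ Ioo a b, DifferentiableAt ℝ f x := fun x hx =>
    (hf.differentiableOn one_ne_zero).differentiableAt (isOpen_Ioo.mem_nhds hx)
  have hwindow : ∀ x₀, μ / ν < x₀ - a → μ / ν < b - x₀ →
      Icc (x₀ - μ / ν) (x₀ + μ / ν) ⊆ Ioo a b := fun x₀ ha hb x hx =>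
    ⟨by linarith [hx.1], by linarith [hx.2]⟩
  have hnear : ∀ x₀, f x₀ = 0 → μ / ν < x₀ - a → μ / ν < b - x₀ →
      ∃ r d c, Ioo d c ⊆ Ioo (x₀ - μ / ν) (x₀ + μ / ν) ∧ x₀ ∈ Ioo d c ∧ r ∈ Ioo d c ∧
        (∀ x ∈ Ioo d c, |f x| < μ) ∧ f r + g r = 0 := fun x₀ hf₀ ha hb =>
    have hsub := hwindow x₀ ha hb
    exists_root_add_near hμ hν (fun x hx => hdiff x (hsub hx)) (fun x hx => halt x (hsub hx))
      (hg.mono hsub) (fun x hx => hgsmall x (hsub hx)) hf₀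
  choose! r d c hdc hx₀ hr hsmall hroot using hnear
  refine ⟨r, fun x₀ _ hf₀ ha hb => ⟨hdc x₀ hf₀ ha hb (hr x₀ hf₀ ha hb), hroot x₀ hf₀ ha hb⟩, ?_⟩
  intro x₀ _ y₀ _ hfx hax hbx hfy hay hby hne hrxy
  set K := Ioo (d x₀) (c x₀) ∪ Ioo (d y₀) (c y₀)
  have hK : K.OrdConnected := isPreconnected_iff_ordConnected.mp <|
    isPreconnected_Ioo.union (r x₀) (hr x₀ hfx hax hbx) (hrxy ▸ hr y₀ hfy hay hby)
      isPreconnected_Ioo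
  have hKab : K ⊆ Ioo a b := union_subset
    ((hdc x₀ hfx hax hbx).trans (Ioo_subset_Icc_self.trans (hwindow x₀ hax hbx)))
    ((hdc y₀ hfy hay hby).trans (Ioo_subset_Icc_self.trans (hwindow y₀ hay hby)))
  have hsmallK : ∀ x ∈ K, |f x| < μ := by
    rintro x (hx | hx)
    exacts [hsmall x₀ hfx hax hbx x hx, hsmall y₀ hfy hay hby x hx]
  exact hne <| hK.injOn_of_deriv_ne_zero
    (continuousOn_of_forall_continuousAt fun x hx => (hdiff x (hKab hx)).continuousAt)
    (fun x hx => deriv_ne_zero_of_abs_lt hν.le (halt x (hKab hx)) (hsmallK x hx))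
    (Or.inl (hx₀ x₀ hfx hax hbx)) (Or.inr (hx₀ y₀ hfy hay hby)) (hfx.trans hfy.symm)

/-- Perturbation of roots: for a C¹ function `f` on `(a,b)` with `|f| > μ` or `|f'| > ν` at
each point, and a perturbation `g` with `|g| < μ` on `(a,b)`, each root `x₀` of `f` away from
the endpoints yields a root of `f + g` in `(x₀ - μ/ν, x₀ + μ/ν)`, distinct roots yielding
distinct roots. -/
theorem stmt2 (μ ν a b : ℝ) (hμ : 0 < μ) (hν : 0 < ν) (hlen : 2 * μ / ν ≤ b - a)
    (f g : ℝ → ℝ) (hf : ContDiffOn ℝ 1 f (Set.Ioo a b))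
    (hg : ContinuousOn g (Set.Ioo a b))
    (halt : ∀ x ∈ Set.Ioo a b, μ < |f x| ∨ ν < |deriv f x|)
    (hgsmall : ∀ x ∈ Set.Ioo a b, |g x| < μ) :
    ∃ r : ℝ → ℝ,
      (∀ x₀ ∈ Set.Ioo a b, f x₀ = 0 → μ / ν < x₀ - a → μ / ν < b - x₀ →
        r x₀ ∈ Set.Ioo (x₀ - μ / ν) (x₀ + μ / ν) ∧ f (r x₀) + g (r x₀) = 0) ∧
      (∀ x₀ ∈ Set.Ioo a b, ∀ y₀ ∈ Set.Ioo a b,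
        f x₀ = 0 → μ / ν < x₀ - a → μ / ν < b - x₀ →
        f y₀ = 0 → μ / ν < y₀ - a → μ / ν < b - y₀ → x₀ ≠ y₀ → r x₀ ≠ r y₀) :=
  stmt2_general μ ν a b hμ hν f g hf hg halt hgsmall
end

section
/- Let m be a positive integer, E = {μ ∈ ℤ² : μ₁² + μ₂² = m} with N = #E ≥ 1, and let v ∈ ℝ² be a unit vector. Then Σ_{μ ∈ E} ⟨μ/√m, v⟩² = N/2. -/
/-!
Swapping the coordinates and negating the first coordinate both preserve the circle
`x² + y² = m`, so over its lattice points `∑ x² = ∑ y²` and `∑ x y = 0`. Together with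
`∑ (x² + y²) = N m` this makes the quadratic form `u ↦ ∑ ⟨μ, u⟩²` equal to `N m / 2 · ‖u‖²`.
-/

namespace LatticeCircle

variable {m : ℤ} {E : Finset (ℤ × ℤ)}

theorem sum_fst_sq_eq_sum_snd_sq (hE : ∀ μ : ℤ × ℤ, μ ∈ E ↔ μ.1 ^ 2 + μ.2 ^ 2 = m) :
    ∑ μ ∈ E, (μ.1 : ℝ) ^ 2 = ∑ μ ∈ E, (μ.2 : ℝ) ^ 2 :=
  Finset.sum_equiv (Equiv.prodComm ℤ ℤ) (fun μ => by simp [hE, add_comm]) (fun _ _ => rfl)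

theorem sum_fst_mul_snd_eq_zero (hE : ∀ μ : ℤ × ℤ, μ ∈ E ↔ μ.1 ^ 2 + μ.2 ^ 2 = m) :
    ∑ μ ∈ E, (μ.1 : ℝ) * μ.2 = 0 := by
  have h : ∑ μ ∈ E, (μ.1 : ℝ) * μ.2 = ∑ μ ∈ E, -((μ.1 : ℝ) * μ.2) :=
    Finset.sum_equiv ((Equiv.neg ℤ).prodCongr (Equiv.refl ℤ)) (fun μ => by simp [hE])
      (fun μ _ => by simp)
  rw [Finset.sum_neg_distrib] at h
  linarith

theorem sum_sq_add_sq (hE : ∀ μ : ℤ × ℤ, μ ∈ E ↔ μ.1 ^ 2 + μ.2 ^ 2 = m) :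
    ∑ μ ∈ E, ((μ.1 : ℝ) ^ 2 + (μ.2 : ℝ) ^ 2) = E.card * m := by
  have hcircle : ∀ μ ∈ E, (μ.1 : ℝ) ^ 2 + (μ.2 : ℝ) ^ 2 = m := fun μ hμ => by
    exact_mod_cast (hE μ).mp hμ
  rw [Finset.sum_congr rfl hcircle, Finset.sum_const, nsmul_eq_mul]

theorem sum_inner_sq (hE : ∀ μ : ℤ × ℤ, μ ∈ E ↔ μ.1 ^ 2 + μ.2 ^ 2 = m) (u : ℝ × ℝ) :
    ∑ μ ∈ E, ((μ.1 : ℝ) * u.1 + μ.2 * u.2) ^ 2 = E.card * m / 2 * (u.1 ^ 2 + u.2 ^ 2) := by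
  have hswap := sum_fst_sq_eq_sum_snd_sq hE
  have hcross := sum_fst_mul_snd_eq_zero hE
  have htotal := sum_sq_add_sq hE
  have hexpand : ∑ μ ∈ E, ((μ.1 : ℝ) * u.1 + μ.2 * u.2) ^ 2 =
      (∑ μ ∈ E, (μ.1 : ℝ) ^ 2) * u.1 ^ 2 + 2 * (∑ μ ∈ E, (μ.1 : ℝ) * μ.2) * (u.1 * u.2)
        + (∑ μ ∈ E, (μ.2 : ℝ) ^ 2) * u.2 ^ 2 := by
    simp only [Finset.sum_mul, Finset.mul_sum, ← Finset.sum_add_distrib]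
    exact Finset.sum_congr rfl fun _ _ => by ring
  rw [Finset.sum_add_distrib, ← hswap] at htotal
  rw [hexpand, hcross, ← hswap]
  linear_combination (u.1 ^ 2 + u.2 ^ 2) / 2 * htotal

end LatticeCircle

theorem stmt5_general (m : ℕ) (hm : 0 < m) (E : Finset (ℤ × ℤ))
    (hE : ∀ μ : ℤ × ℤ, μ ∈ E ↔ μ.1 ^ 2 + μ.2 ^ 2 = (m : ℤ))
    (N : ℕ) (hN : N = E.card)
    (v : ℝ × ℝ) (hv : v.1 ^ 2 + v.2 ^ 2 = 1) :
    ∑ μ ∈ E, ((μ.1 : ℝ) / Real.sqrt m * v.1 + (μ.2 : ℝ) / Real.sqrt m * v.2) ^ 2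
      = (N : ℝ) / 2 := by
  have hm' : (0 : ℝ) < m := by exact_mod_cast hm
  have hterm : ∀ μ : ℤ × ℤ, ((μ.1 : ℝ) / Real.sqrt m * v.1 + (μ.2 : ℝ) / Real.sqrt m * v.2) ^ 2
      = ((μ.1 : ℝ) * v.1 + μ.2 * v.2) ^ 2 / m := fun μ => by
    rw [div_mul_eq_mul_div, div_mul_eq_mul_div, ← add_div, div_pow, Real.sq_sqrt hm'.le]
  simp only [hterm, ← Finset.sum_div, LatticeCircle.sum_inner_sq hE, hv, hN, Int.cast_natCast]
  field_simp

/-- Isotropy of the lattice point set: if `E = {μ ∈ ℤ² : μ₁² + μ₂² = m}` has `N ≥ 1`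
elements and `v` is a unit vector in `ℝ²`, then `∑_{μ ∈ E} ⟨μ/√m, v⟩² = N/2`. -/
theorem stmt5 (m : ℕ) (hm : 0 < m) (E : Finset (ℤ × ℤ))
    (hE : ∀ μ : ℤ × ℤ, μ ∈ E ↔ μ.1 ^ 2 + μ.2 ^ 2 = (m : ℤ))
    (N : ℕ) (hN : N = E.card) (hN1 : 1 ≤ N)
    (v : ℝ × ℝ) (hv : v.1 ^ 2 + v.2 ^ 2 = 1) :
    ∑ μ ∈ E, ((μ.1 : ℝ) / Real.sqrt m * v.1 + (μ.2 : ℝ) / Real.sqrt m * v.2) ^ 2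
      = (N : ℝ) / 2 :=
  stmt5_general m hm E hE N hN v hv
end

section
/- Let m be a positive integer, E = {μ ∈ ℤ² : μ₁² + μ₂² = m} with N = #E, λ = √m, and fix t ∈ ℝ and a point γ ∈ ℝ² and a unit vector γ' ∈ ℝ². For each μ ∈ E define u_μ = (cos(2π⟨μ, γ⟩), -2π⟨μ/λ, γ'⟩ sin(2π⟨μ, γ⟩)) and v_μ = (sin(2π⟨μ, γ⟩), 2π⟨μ/λ, γ'⟩ cos(2π⟨μ, γ⟩)). Then for every (a,b) on the unit circle of ℝ², Σ_{μ∈E} (⟨u_μ, (a,b)⟩² + ⟨v_μ, (a,b)⟩²) = N a² + 2π² N b², and in particular this sum is bounded between c·N and C·N for absolute constants 0 < c ≤ C. -/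
open Real Finset

/-!
The lattice points on a circle are symmetric under `(x, y) ↦ (y, x)` and `(x, y) ↦ (x, -y)`,
so their second-moment matrix is a multiple of the identity: `∑ ⟨μ, v⟩² = (N m / 2) ‖v‖²`.
Since `u_μ, v_μ` are the rotations by `θ_μ` of `(1, 0)` and `(0, d_μ)`, the quadratic form in
`(a, b)` is `∑ (a² + b² d_μ²)`, and `∑ d_μ² = 4π² / m · N m / 2 = 2π² N`.
-/

section LatticeCircle

variable {E : Finset (ℤ × ℤ)} {n : ℤ}

theorem sum_fst_sq_eq_sum_snd_sq (hE : ∀ μ : ℤ × ℤ, μ ∈ E ↔ μ.1 ^ 2 + μ.2 ^ 2 = n) :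
    ∑ μ ∈ E, (μ.1 : ℝ) ^ 2 = ∑ μ ∈ E, (μ.2 : ℝ) ^ 2 :=
  Finset.sum_equiv (Equiv.prodComm ℤ ℤ) (fun μ => by simp only [hE]; simp [add_comm])
    (fun _ _ => rfl)

theorem sum_fst_mul_snd_eq_zero (hE : ∀ μ : ℤ × ℤ, μ ∈ E ↔ μ.1 ^ 2 + μ.2 ^ 2 = n) :
    ∑ μ ∈ E, (μ.1 : ℝ) * μ.2 = 0 := by
  have hflip : ∑ μ ∈ E, (μ.1 : ℝ) * μ.2 = ∑ μ ∈ E, -((μ.1 : ℝ) * μ.2) :=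
    Finset.sum_equiv ((Equiv.refl ℤ).prodCongr (Equiv.neg ℤ)) (fun μ => by simp [hE])
      (fun μ _ => by simp)
  rw [Finset.sum_neg_distrib] at hflip
  linarith

theorem sum_fst_sq_add_snd_sq (hE : ∀ μ : ℤ × ℤ, μ ∈ E ↔ μ.1 ^ 2 + μ.2 ^ 2 = n) :
    ∑ μ ∈ E, ((μ.1 : ℝ) ^ 2 + (μ.2 : ℝ) ^ 2) = E.card * n := by
  rw [Finset.sum_congr rfl fun μ hμ => (by exact_mod_cast (hE μ).1 hμ : _ = (n : ℝ)),
    Finset.sum_const, nsmul_eq_mul]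

theorem sum_sq_inner_eq (hE : ∀ μ : ℤ × ℤ, μ ∈ E ↔ μ.1 ^ 2 + μ.2 ^ 2 = n) (x y : ℝ) :
    ∑ μ ∈ E, ((μ.1 : ℝ) * x + μ.2 * y) ^ 2 = E.card * n / 2 * (x ^ 2 + y ^ 2) := by
  have hexpand : ∑ μ ∈ E, ((μ.1 : ℝ) * x + μ.2 * y) ^ 2 =
      (∑ μ ∈ E, (μ.1 : ℝ) ^ 2) * x ^ 2 + 2 * (∑ μ ∈ E, (μ.1 : ℝ) * μ.2) * (x * y)
        + (∑ μ ∈ E, (μ.2 : ℝ) ^ 2) * y ^ 2 := by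
    simp only [Finset.sum_mul, Finset.mul_sum, ← Finset.sum_add_distrib]
    exact Finset.sum_congr rfl fun _ _ => by ring
  have htotal := sum_fst_sq_add_snd_sq hE
  rw [Finset.sum_add_distrib, ← sum_fst_sq_eq_sum_snd_sq hE] at htotal
  rw [hexpand, sum_fst_mul_snd_eq_zero hE, ← sum_fst_sq_eq_sum_snd_sq hE]
  linear_combination (x ^ 2 + y ^ 2) / 2 * htotal

end LatticeCircle

theorem rotate_sq_add_sq (a b d θ : ℝ) :
    (a * cos θ + b * (-d * sin θ)) ^ 2 + (a * sin θ + b * (d * cos θ)) ^ 2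
      = a ^ 2 + b ^ 2 * d ^ 2 := by
  linear_combination (a ^ 2 + b ^ 2 * d ^ 2) * sin_sq_add_cos_sq θ

theorem le_mul_sq_add_mul_sq_le {N a b c : ℝ} (hN : 0 ≤ N) (hc : 1 ≤ c)
    (hab : a ^ 2 + b ^ 2 = 1) :
    N ≤ N * a ^ 2 + c * N * b ^ 2 ∧ N * a ^ 2 + c * N * b ^ 2 ≤ c * N := by
  have hNc : 0 ≤ (c - 1) * N := mul_nonneg (by linarith) hN
  constructor <;> nlinarith [mul_nonneg hNc (sq_nonneg a), mul_nonneg hNc (sq_nonneg b)]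

theorem one_le_two_mul_pi_sq : 1 ≤ 2 * π ^ 2 := by
  nlinarith [pi_gt_three]

/-- Isotropy of the vectors `u_μ, v_μ`: with `θ_μ = 2π⟨μ, γ⟩` and
`d_μ = 2π⟨μ/λ, γ'⟩`, `u_μ = (cos θ_μ, -d_μ sin θ_μ)`, `v_μ = (sin θ_μ, d_μ cos θ_μ)`,
for every `(a,b)` on the unit circle,
`∑_{μ∈E} (⟨u_μ,(a,b)⟩² + ⟨v_μ,(a,b)⟩²) = N a² + 2π² N b²`, which lies between
`N` and `2π² N`. -/
theorem stmt6 (m : ℕ) (hm : 0 < m) (E : Finset (ℤ × ℤ))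
    (hE : ∀ μ : ℤ × ℤ, μ ∈ E ↔ μ.1 ^ 2 + μ.2 ^ 2 = (m : ℤ))
    (N : ℕ) (hN : N = E.card)
    (γ γ' : ℝ × ℝ) (hγ' : γ'.1 ^ 2 + γ'.2 ^ 2 = 1)
    (a b : ℝ) (hab : a ^ 2 + b ^ 2 = 1)
    (lam θ d : _) (hlam : lam = Real.sqrt m)
    (hθ : θ = fun μ : ℤ × ℤ => 2 * π * ((μ.1 : ℝ) * γ.1 + (μ.2 : ℝ) * γ.2))
    (hd : d = fun μ : ℤ × ℤ =>
      2 * π * ((μ.1 : ℝ) / lam * γ'.1 + (μ.2 : ℝ) / lam * γ'.2)) :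
    (∑ μ ∈ E, ((a * Real.cos (θ μ) + b * (-(d μ) * Real.sin (θ μ))) ^ 2
        + (a * Real.sin (θ μ) + b * (d μ * Real.cos (θ μ))) ^ 2)
      = (N : ℝ) * a ^ 2 + 2 * π ^ 2 * N * b ^ 2) ∧
    (N : ℝ) ≤ (N : ℝ) * a ^ 2 + 2 * π ^ 2 * N * b ^ 2 ∧
    (N : ℝ) * a ^ 2 + 2 * π ^ 2 * N * b ^ 2 ≤ 2 * π ^ 2 * N := by
  have hm0 : (0 : ℝ) < m := by exact_mod_cast hm
  have hlam_sq : lam ^ 2 = m := by rw [hlam, sq_sqrt hm0.le]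
  have hd_sq : ∀ μ : ℤ × ℤ, d μ ^ 2 = 4 * π ^ 2 / m * ((μ.1 : ℝ) * γ'.1 + μ.2 * γ'.2) ^ 2 := by
    intro μ
    rw [hd, ← hlam_sq]
    field_simp
    ring
  have hd_sum : ∑ μ ∈ E, d μ ^ 2 = 2 * π ^ 2 * N := by
    simp only [hd_sq, ← Finset.mul_sum, sum_sq_inner_eq hE, hγ', hN]
    push_cast
    field_simp
    ring
  refine ⟨?_, le_mul_sq_add_mul_sq_le N.cast_nonneg one_le_two_mul_pi_sq hab⟩
  simp only [rotate_sq_add_sq, Finset.sum_add_distrib, ← Finset.mul_sum, hd_sum, Finset.sum_const,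
    nsmul_eq_mul, hN]
  ring
end

section
/- Let F be a holomorphic function on an open set containing the closed disk B̄(z₀, R) in ℂ, with 0 < r < R and F not identically zero on B̄(z₀, r). Then the number of zeros of F (counted with multiplicity) in the closed disk B̄(z₀, r) is at most (log(M/m)) / log((R² + r²)/(2Rr)), where M = max_{|w - z₀| ≤ R} |F(w)| and m = max_{|w - z₀| ≤ r} |F(w)|. -/
open Metric ComplexConjugate

/-!
Divide out the zeros, `F w = G w * ∏ z ∈ Z, (w - z) ^ n z` with `G` holomorphic, and replace each
factor `w - z` by `(R² - conj (z - z₀) * (w - z₀)) / R`. The two have the same modulus on the circle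
`‖w - z₀‖ = R`, so the resulting holomorphic `H` is bounded by `M` there, hence on the whole disk by
the maximum modulus principle. For `z, w` in the smaller disk the ratio of the moduli is at most
`2Rr / (R² + r²)`, so at a point `w₀` with `‖F w₀‖ = m` we get `m ≤ (2Rr / (R² + r²)) ^ N * M`.
-/

theorem exists_eq_pow_mul_of_le_analyticOrderAt {F : ℂ → ℂ} {S : Set ℂ} (hS : IsOpen S)
    (hF : DifferentiableOn ℂ F S) {a : ℂ} (ha : a ∈ S) {k : ℕ}
    (hk : (k : ℕ∞) ≤ analyticOrderAt F a) :
    ∃ G : ℂ → ℂ, DifferentiableOn ℂ G S ∧ ∀ w, F w = (w - a) ^ k * G w := by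
  induction k generalizing F with
  | zero => exact ⟨F, hF, fun w => by simp⟩
  | succ k ih =>
    have hFa : F a = 0 :=
      apply_eq_zero_of_analyticOrderAt_ne_zero (ne_bot_of_le_ne_bot (by simp) hk)
    have hD : DifferentiableOn ℂ (dslope F a) S :=
      (Complex.differentiableOn_dslope (hS.mem_nhds ha)).2 hF
    have hFD : F = (· - a) * dslope F a := funext fun w => (sub_smul_dslope_of_zero hFa w).symm
    have hord : analyticOrderAt F a = 1 + analyticOrderAt (dslope F a) a := by
      conv_lhs => rw [hFD]
      rw [analyticOrderAt_mul (by fun_prop) (hD.analyticAt (hS.mem_nhds ha)),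
        analyticOrderAt_id_sub_const_self]
    obtain ⟨G, hG, hDG⟩ := ih hD (by
      rw [hord, Nat.cast_succ, add_comm (k : ℕ∞)] at hk
      exact (ENat.add_le_add_iff_left ENat.one_ne_top).1 hk)
    refine ⟨G, hG, fun w => ?_⟩
    rw [hFD, Pi.mul_apply, hDG, pow_succ]
    ring

theorem analyticOrderAt_eq_of_eq_pow_mul {F G : ℂ → ℂ} {a z : ℂ} {k : ℕ}
    (hFG : ∀ w, F w = (w - a) ^ k * G w) (hG : AnalyticAt ℂ G z) (hz : z ≠ a) :
    analyticOrderAt F z = analyticOrderAt G z := by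
  have hP : analyticOrderAt (fun w => (w - a) ^ k) z = 0 :=
    (AnalyticAt.analyticOrderAt_eq_zero (by fun_prop)).2 (pow_ne_zero _ (sub_ne_zero.2 hz))
  rw [show F = (fun w => (w - a) ^ k) * G from funext hFG,
    analyticOrderAt_mul (by fun_prop) hG, hP, zero_add]

theorem exists_eq_mul_prod_pow_of_le_analyticOrderAt {F : ℂ → ℂ} {S : Set ℂ} (hS : IsOpen S)
    (hF : DifferentiableOn ℂ F S) {Z : Finset ℂ} (hZ : ↑Z ⊆ S) {n : ℂ → ℕ}
    (hn : ∀ z ∈ Z, (n z : ℕ∞) ≤ analyticOrderAt F z) :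
    ∃ G : ℂ → ℂ, DifferentiableOn ℂ G S ∧ ∀ w, F w = G w * ∏ z ∈ Z, (w - z) ^ n z := by
  induction Z using Finset.induction_on generalizing F with
  | empty => exact ⟨F, hF, fun w => by simp⟩
  | @insert a Z ha ih =>
    rw [Finset.coe_insert, Set.insert_subset_iff] at hZ
    obtain ⟨F₁, hF₁, hFF₁⟩ :=
      exists_eq_pow_mul_of_le_analyticOrderAt hS hF hZ.1 (hn a (Finset.mem_insert_self a Z))
    have hn₁ : ∀ z ∈ Z, (n z : ℕ∞) ≤ analyticOrderAt F₁ z := fun z hz => by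
      rw [← analyticOrderAt_eq_of_eq_pow_mul hFF₁ (hF₁.analyticAt (hS.mem_nhds (hZ.2 hz)))
        (ne_of_mem_of_not_mem hz ha)]
      exact hn z (Finset.mem_insert_of_mem hz)
    obtain ⟨G, hG, hF₁G⟩ := ih hF₁ hZ.2 hn₁
    refine ⟨G, hG, fun w => ?_⟩
    rw [Finset.prod_insert ha, hFF₁, hF₁G]
    ring

noncomputable def blaschkeFactor (R : ℝ) (b u : ℂ) : ℂ := ((R : ℂ) ^ 2 - conj b * u) / R

@[fun_prop]
theorem differentiable_blaschkeFactor (R : ℝ) (b : ℂ) : Differentiable ℂ (blaschkeFactor R b) := by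
  unfold blaschkeFactor
  fun_prop

theorem norm_blaschkeFactor_of_norm_eq {R : ℝ} (hR : 0 < R) (b : ℂ) {u : ℂ} (hu : ‖u‖ = R) :
    ‖blaschkeFactor R b u‖ = ‖u - b‖ := by
  have hR2 : (R : ℂ) ^ 2 = u * conj u := by
    rw [Complex.mul_conj, Complex.normSq_eq_norm_sq, hu]
    push_cast
    rfl
  rw [blaschkeFactor, hR2, show u * conj u - conj b * u = u * conj (u - b) by rw [map_sub]; ring,
    norm_div, norm_mul, Complex.norm_conj, hu, Complex.norm_real, Real.norm_of_nonneg hR.le,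
    mul_div_cancel_left₀ _ hR.ne']

theorem add_sq_mul_norm_sub_le {r R : ℝ} (hrR : r ≤ R) {b u : ℂ} (hb : ‖b‖ ≤ r) (hu : ‖u‖ ≤ r) :
    (R ^ 2 + r ^ 2) * ‖u - b‖ ≤ 2 * r * ‖(R : ℂ) ^ 2 - conj b * u‖ := by
  set s := ‖b‖
  set v := ‖u‖
  set t := (conj b * u).re
  have hs : 0 ≤ s := norm_nonneg b
  have hv : 0 ≤ v := norm_nonneg u
  have hr : 0 ≤ r := hs.trans hb
  have ht : -(s * v) ≤ t := by
    refine neg_le_of_abs_le ((Complex.abs_re_le_norm _).trans ?_)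
    rw [norm_mul, Complex.norm_conj]
  have hsub : ‖u - b‖ ^ 2 = v ^ 2 + s ^ 2 - 2 * t := by
    rw [Complex.sq_norm, Complex.normSq_sub, ← Complex.sq_norm, ← Complex.sq_norm, mul_comm u]
  have hdiff : ‖(R : ℂ) ^ 2 - conj b * u‖ ^ 2 = R ^ 4 + s ^ 2 * v ^ 2 - 2 * R ^ 2 * t := by
    rw [Complex.sq_norm, Complex.normSq_sub, ← Complex.sq_norm, ← Complex.sq_norm, norm_mul,
      Complex.norm_conj, ← Complex.ofReal_pow, Complex.norm_real, Complex.re_ofReal_mul,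
      Complex.conj_re, Real.norm_eq_abs, sq_abs]
    ring
  -- `2r(R² + sv) - (R² + r²)(s + v) = (r - s)(R² + r² - 2rv) + (r - v)(R² - r²)`
  have hlin : (R ^ 2 + r ^ 2) * (s + v) ≤ 2 * r * (R ^ 2 + s * v) := by
    nlinarith [mul_nonneg (sub_nonneg.2 hb) (show 0 ≤ R ^ 2 + r ^ 2 - 2 * r * v by nlinarith),
      mul_nonneg (sub_nonneg.2 hu) (show 0 ≤ R ^ 2 - r ^ 2 by nlinarith)]
  refine pow_le_pow_iff_left₀ (by positivity) (by positivity) two_ne_zero |>.1 ?_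
  rw [mul_pow, mul_pow, hsub, hdiff]
  nlinarith [pow_le_pow_left₀ (by positivity) hlin 2,
    mul_nonneg (sq_nonneg (R ^ 2 - r ^ 2)) (show 0 ≤ t + s * v by linarith)]

theorem mul_norm_sub_le_norm_blaschkeFactor {r R : ℝ} (hr : 0 < r) (hrR : r ≤ R) {b u : ℂ}
    (hb : ‖b‖ ≤ r) (hu : ‖u‖ ≤ r) :
    (R ^ 2 + r ^ 2) / (2 * R * r) * ‖u - b‖ ≤ ‖blaschkeFactor R b u‖ := by
  have hR : 0 < R := hr.trans_le hrR
  rw [blaschkeFactor, norm_div, Complex.norm_real, Real.norm_of_nonneg hR.le, div_mul_eq_mul_div,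
    div_le_div_iff₀ (by positivity) hR]
  calc (R ^ 2 + r ^ 2) * ‖u - b‖ * R ≤ 2 * r * ‖(R : ℂ) ^ 2 - conj b * u‖ * R :=
        mul_le_mul_of_nonneg_right (add_sq_mul_norm_sub_le hrR hb hu) hR.le
    _ = ‖(R : ℂ) ^ 2 - conj b * u‖ * (2 * R * r) := by ring

noncomputable def blaschkeProduct (z₀ : ℂ) (R : ℝ) (Z : Finset ℂ) (n : ℂ → ℕ) (w : ℂ) : ℂ :=
  ∏ z ∈ Z, blaschkeFactor R (z - z₀) (w - z₀) ^ n z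

@[fun_prop]
theorem differentiable_blaschkeProduct (z₀ : ℂ) (R : ℝ) (Z : Finset ℂ) (n : ℂ → ℕ) :
    Differentiable ℂ (blaschkeProduct z₀ R Z n) := by
  unfold blaschkeProduct
  fun_prop

theorem norm_blaschkeProduct_of_mem_sphere {z₀ : ℂ} {R : ℝ} (hR : 0 < R) (Z : Finset ℂ)
    (n : ℂ → ℕ) {w : ℂ} (hw : w ∈ sphere z₀ R) :
    ‖blaschkeProduct z₀ R Z n w‖ = ‖∏ z ∈ Z, (w - z) ^ n z‖ := by
  simp only [blaschkeProduct, norm_prod, norm_pow,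
    norm_blaschkeFactor_of_norm_eq hR _ (mem_sphere_iff_norm.1 hw), sub_sub_sub_cancel_right]

theorem pow_sum_mul_norm_prod_le_norm_blaschkeProduct {z₀ : ℂ} {r R : ℝ} (hr : 0 < r)
    (hrR : r ≤ R) {Z : Finset ℂ} (hZ : ↑Z ⊆ closedBall z₀ r) (n : ℂ → ℕ) {w : ℂ}
    (hw : w ∈ closedBall z₀ r) :
    ((R ^ 2 + r ^ 2) / (2 * R * r)) ^ (∑ z ∈ Z, n z) * ‖∏ z ∈ Z, (w - z) ^ n z‖ ≤
      ‖blaschkeProduct z₀ R Z n w‖ := by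
  have hR : 0 < R := hr.trans_le hrR
  simp only [blaschkeProduct, norm_prod, norm_pow, ← Finset.prod_pow_eq_pow_sum,
    ← Finset.prod_mul_distrib, ← mul_pow]
  gcongr with z hz
  rw [← sub_sub_sub_cancel_right w z z₀]
  exact mul_norm_sub_le_norm_blaschkeFactor hr hrR (mem_closedBall_iff_norm.1 (hZ hz))
    (mem_closedBall_iff_norm.1 hw)

theorem norm_le_of_forall_mem_sphere_norm_le {E : Type*} [NormedAddCommGroup E] [NormedSpace ℂ E]
    {f : ℂ → E} {z₀ : ℂ} {R C : ℝ} (hR : 0 < R) (hf : DifferentiableOn ℂ f (closedBall z₀ R))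
    (hC : ∀ w ∈ sphere z₀ R, ‖f w‖ ≤ C) {w : ℂ} (hw : w ∈ closedBall z₀ R) : ‖f w‖ ≤ C := by
  rw [← closure_ball z₀ hR.ne'] at hf hw
  exact Complex.norm_le_of_forall_mem_frontier_norm_le isBounded_ball hf.diffContOnCl
    (by rwa [frontier_ball z₀ hR.ne']) hw

theorem natCast_le_log_div_log_of_mul_pow_le {m M q : ℝ} {N : ℕ} (hm : 0 < m) (hq : 1 < q)
    (h : m * q ^ N ≤ M) : (N : ℝ) ≤ Real.log (M / m) / Real.log q := by
  rw [le_div_iff₀ (Real.log_pos hq), ← Real.log_pow]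
  exact Real.log_le_log (by positivity) ((le_div_iff₀' hm).2 h)

/-- Jensen's bound: a holomorphic function on a neighborhood of `closedBall z₀ R`, not
identically zero on `closedBall z₀ r` (`0 < r < R`), has at most
`log(M/m) / log((R²+r²)/(2Rr))` zeros (with multiplicity) in `closedBall z₀ r`, where
`M`, `m` are the maxima of `|F|` on the balls of radii `R`, `r`. -/
theorem stmt8 (F : ℂ → ℂ) (U : Set ℂ) (hU : IsOpen U) (z₀ : ℂ) (r R : ℝ)
    (hr : 0 < r) (hrR : r < R) (hball : closedBall z₀ R ⊆ U)
    (hF : DifferentiableOn ℂ F U)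
    (hnz : ∃ w ∈ closedBall z₀ r, F w ≠ 0)
    (M m : ℝ)
    (hM : IsGreatest ((fun w => ‖F w‖) '' closedBall z₀ R) M)
    (hm : IsGreatest ((fun w => ‖F w‖) '' closedBall z₀ r) m)
    (Z : Finset ℂ) (hZ : ∀ z ∈ Z, z ∈ closedBall z₀ r ∧ F z = 0)
    (n : ℂ → ℕ)
    (hmult : ∀ z ∈ Z, ∃ hz : AnalyticAt ℂ F z, analyticOrderAt F z = (n z : ℕ∞)) :
    (∑ z ∈ Z, (n z : ℝ)) ≤ Real.log (M / m) / Real.log ((R ^ 2 + r ^ 2) / (2 * R * r)) := by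
  have hR : 0 < R := hr.trans hrR
  have hrR' : closedBall z₀ r ⊆ closedBall z₀ R := closedBall_subset_closedBall hrR.le
  have hZr : ↑Z ⊆ closedBall z₀ r := fun z hz => (hZ z hz).1
  obtain ⟨G, hG, hFG⟩ := exists_eq_mul_prod_pow_of_le_analyticOrderAt hU hF
    (hZr.trans (hrR'.trans hball)) fun z hz => (hmult z hz).choose_spec.ge
  have hH : ∀ w ∈ closedBall z₀ R, ‖G w * blaschkeProduct z₀ R Z n w‖ ≤ M := by
    refine fun w => norm_le_of_forall_mem_sphere_norm_le hR
      ((hG.mono hball).fun_mul (by fun_prop)) fun x hx => ?_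
    rw [norm_mul, norm_blaschkeProduct_of_mem_sphere hR Z n hx, ← norm_mul, ← hFG]
    exact hM.2 ⟨x, sphere_subset_closedBall hx, rfl⟩
  obtain ⟨w₀, hw₀, rfl⟩ := hm.1
  have hm0 : 0 < ‖F w₀‖ := by
    obtain ⟨w, hw, hFw⟩ := hnz
    exact (norm_pos_iff.2 hFw).trans_le (hm.2 ⟨w, hw, rfl⟩)
  have hq : 1 < (R ^ 2 + r ^ 2) / (2 * R * r) := by
    rw [one_lt_div (by positivity)]
    nlinarith [sq_pos_of_pos (sub_pos.2 hrR)]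
  have hmM : ‖F w₀‖ * ((R ^ 2 + r ^ 2) / (2 * R * r)) ^ (∑ z ∈ Z, n z) ≤ M :=
    calc ‖F w₀‖ * ((R ^ 2 + r ^ 2) / (2 * R * r)) ^ (∑ z ∈ Z, n z)
        = ‖G w₀‖ * (((R ^ 2 + r ^ 2) / (2 * R * r)) ^ (∑ z ∈ Z, n z) *
            ‖∏ z ∈ Z, (w₀ - z) ^ n z‖) := by rw [hFG, norm_mul]; ring
      _ ≤ ‖G w₀ * blaschkeProduct z₀ R Z n w₀‖ := by
          rw [norm_mul]
          gcongr
          exact pow_sum_mul_norm_prod_le_norm_blaschkeProduct hr hrR.le hZr n hw₀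
      _ ≤ M := hH w₀ (hrR' hw₀)
  exact_mod_cast natCast_le_log_div_log_of_mul_pow_le hm0 hq hmM
end

section
/- Let H : [0,1] → ℂ be continuously differentiable, and let 0 ≤ x₁ < x₂ < ⋯ < x_M ≤ 1 be points with consecutive gaps at least δ > 0, with x₁ ≥ δ/2 and x_M ≤ 1 - δ/2. Then Σ_{i=1}^M |H(x_i)|² ≤ (1/δ) ∫₀¹ |H(t)|² dt + ∫₀¹ |H(t)| |H'(t)| dt. -/
/-!
Splitting `[a - h, a + h]` at `a` and averaging `|g a - g s| ≤ ∫ |g'|` over `s` in each half gives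
`2h g(a) ≤ ∫ g + h ∫ |g'|`; for `g = ‖H‖²` one has `|g'| ≤ 2‖H‖‖H'‖`. The intervals of half-length
`δ/2` around `δ`-separated points are disjoint subintervals of `[0, 1]`, so the sum of these local
bounds is at most the integral over `[0, 1]`.
-/

open MeasureTheory intervalIntegral Set Function

section IntervalBounds

variable {g g' : ℝ → ℝ} {u v : ℝ}

theorem abs_sub_le_integral_abs_deriv (hg : ContinuousOn g (Icc u v))
    (hderiv : ∀ t ∈ Ioo u v, HasDerivAt g (g' t) t) (hint : IntervalIntegrable g' volume u v)
    {s t : ℝ} (hs : s ∈ Icc u v) (ht : t ∈ Icc u v) :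
    |g t - g s| ≤ ∫ τ in u..v, |g' τ| := by
  wlog hst : s ≤ t generalizing s t
  · rw [abs_sub_comm]
    exact this ht hs (le_of_not_ge hst)
  have hsub : Icc s t ⊆ Icc u v := Icc_subset_Icc hs.1 ht.2
  have hint' : IntervalIntegrable g' volume s t :=
    hint.mono_set (by rwa [uIcc_of_le hst, uIcc_of_le (hs.1.trans hs.2)])
  rw [← integral_eq_sub_of_hasDerivAt_of_le hst (hg.mono hsub)
    (fun τ hτ => hderiv τ (Ioo_subset_Ioo hs.1 ht.2 hτ)) hint']
  calc |∫ τ in s..t, g' τ| ≤ ∫ τ in s..t, |g' τ| := abs_integral_le_integral_abs hst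
    _ ≤ ∫ τ in u..v, |g' τ| :=
      integral_mono_interval hs.1 hst ht.2 (Filter.Eventually.of_forall fun _ => abs_nonneg _)
        hint.abs

theorem mul_le_integral_add_mul_integral_abs_deriv (huv : u ≤ v) (hg : ContinuousOn g (Icc u v))
    (hderiv : ∀ t ∈ Ioo u v, HasDerivAt g (g' t) t) (hint : IntervalIntegrable g' volume u v)
    {t : ℝ} (ht : t ∈ Icc u v) :
    (v - u) * g t ≤ (∫ τ in u..v, g τ) + (v - u) * ∫ τ in u..v, |g' τ| := by
  have hgi : IntervalIntegrable g volume u v := hg.intervalIntegrable_of_Icc huv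
  have hmono := integral_mono_on huv intervalIntegrable_const (hgi.add intervalIntegrable_const)
    fun s hs => sub_le_iff_le_add'.1
      (abs_sub_le_iff.1 (abs_sub_le_integral_abs_deriv hg hderiv hint hs ht)).1
  rwa [intervalIntegral.integral_const, integral_add hgi intervalIntegrable_const,
    intervalIntegral.integral_const, smul_eq_mul, smul_eq_mul] at hmono

theorem two_mul_le_integral_add_mul_integral_abs_deriv {a h : ℝ} (hh : 0 ≤ h)
    (hg : ContinuousOn g (Icc (a - h) (a + h)))
    (hderiv : ∀ t ∈ Ioo (a - h) (a + h), HasDerivAt g (g' t) t)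
    (hint : IntervalIntegrable g' volume (a - h) (a + h)) :
    2 * h * g a ≤ (∫ τ in a - h..a + h, g τ) + h * ∫ τ in a - h..a + h, |g' τ| := by
  have hl : a - h ≤ a := by linarith
  have hr : a ≤ a + h := by linarith
  have hsubl : Icc (a - h) a ⊆ Icc (a - h) (a + h) := Icc_subset_Icc_right hr
  have hsubr : Icc a (a + h) ⊆ Icc (a - h) (a + h) := Icc_subset_Icc_left hl
  have hintl : IntervalIntegrable g' volume (a - h) a :=
    hint.mono_set (by rwa [uIcc_of_le hl, uIcc_of_le (hl.trans hr)])
  have hintr : IntervalIntegrable g' volume a (a + h) :=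
    hint.mono_set (by rwa [uIcc_of_le hr, uIcc_of_le (hl.trans hr)])
  have left := mul_le_integral_add_mul_integral_abs_deriv hl (hg.mono hsubl)
    (fun t ht => hderiv t (Ioo_subset_Ioo_right hr ht)) hintl (right_mem_Icc.2 hl)
  have right := mul_le_integral_add_mul_integral_abs_deriv hr (hg.mono hsubr)
    (fun t ht => hderiv t (Ioo_subset_Ioo_left hl ht)) hintr (left_mem_Icc.2 hr)
  have hsplit := integral_add_adjacent_intervals
    ((hg.mono hsubl).intervalIntegrable_of_Icc (μ := volume) hl)
    ((hg.mono hsubr).intervalIntegrable_of_Icc hr)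
  have hsplit' := integral_add_adjacent_intervals hintl.abs hintr.abs
  simp only [sub_sub_cancel, add_sub_cancel_left] at left right
  rw [← hsplit, ← hsplit', mul_add]
  linarith

end IntervalBounds

theorem norm_sq_le_integral_of_hasDerivAt {E : Type*} [NormedAddCommGroup E] [InnerProductSpace ℝ E]
    {H H' : ℝ → E} {a h : ℝ} (hh : 0 < h) (hH : ContinuousOn H (Icc (a - h) (a + h)))
    (hH' : ContinuousOn H' (Icc (a - h) (a + h)))
    (hderiv : ∀ t ∈ Ioo (a - h) (a + h), HasDerivAt H (H' t) t) :
    ‖H a‖ ^ 2 ≤ ∫ t in a - h..a + h, ((2 * h)⁻¹ * ‖H t‖ ^ 2 + ‖H t‖ * ‖H' t‖) := by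
  have hah : a - h ≤ a + h := by linarith
  have hsq : IntervalIntegrable (fun t => ‖H t‖ ^ 2) volume (a - h) (a + h) :=
    (hH.norm.pow 2).intervalIntegrable_of_Icc hah
  have hprod : IntervalIntegrable (fun t => ‖H t‖ * ‖H' t‖) volume (a - h) (a + h) :=
    (hH.norm.mul hH'.norm).intervalIntegrable_of_Icc hah
  have key := two_mul_le_integral_add_mul_integral_abs_deriv (g := fun t => ‖H t‖ ^ 2) hh.le
    (hH.norm.pow 2)
    (fun t ht => (hderiv t ht).norm_sq)
    ((continuousOn_const.mul (hH.inner hH')).intervalIntegrable_of_Icc hah)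
  have habs : ∫ t in a - h..a + h, |2 * inner ℝ (H t) (H' t)|
      ≤ 2 * ∫ t in a - h..a + h, ‖H t‖ * ‖H' t‖ := by
    rw [← intervalIntegral.integral_const_mul]
    refine integral_mono_on hah ?_ (hprod.const_mul 2) fun t _ => ?_
    · exact ((continuousOn_const.mul (hH.inner hH')).intervalIntegrable_of_Icc hah).abs
    · rw [abs_mul, abs_two]
      exact mul_le_mul_of_nonneg_left (abs_real_inner_le_norm _ _) zero_le_two
  rw [integral_add (hsq.const_mul _) hprod, intervalIntegral.integral_const_mul, inv_mul_eq_div,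
    div_add' _ _ _ (by positivity), le_div_iff₀ (by positivity)]
  nlinarith

theorem sum_integral_le_integral_of_pairwise_disjoint {ι : Type*} [Fintype ι] {f : ℝ → ℝ}
    {a b : ℝ} {l r : ι → ℝ} (hab : a ≤ b) (hf : IntervalIntegrable f volume a b)
    (hf0 : ∀ t ∈ Ioc a b, 0 ≤ f t) (hlr : ∀ i, a ≤ l i ∧ l i ≤ r i ∧ r i ≤ b)
    (hdisj : Pairwise (Disjoint on fun i => Ioc (l i) (r i))) :
    ∑ i, ∫ t in l i..r i, f t ≤ ∫ t in a..b, f t := by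
  have hsub : ∀ i, Ioc (l i) (r i) ⊆ Ioc a b := fun i => Ioc_subset_Ioc (hlr i).1 (hlr i).2.2
  simp_rw [integral_of_le hab, integral_of_le (hlr _).2.1]
  rw [← integral_iUnion_fintype (fun _ => measurableSet_Ioc) hdisj
    fun i => (hf.1).mono_set (hsub i)]
  exact setIntegral_mono_set hf.1 ((ae_restrict_iff' measurableSet_Ioc).2 (ae_of_all _ hf0))
    (Filter.Eventually.of_forall (iUnion_subset hsub))

theorem sum_norm_sq_le_of_pairwise_le_abs_sub {ι E : Type*} [Fintype ι] [NormedAddCommGroup E]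
    [InnerProductSpace ℝ E] {H H' : ℝ → E} {a b δ : ℝ} (hab : a ≤ b)
    (hH : ContinuousOn H (Icc a b)) (hH' : ContinuousOn H' (Icc a b))
    (hderiv : ∀ t ∈ Ioo a b, HasDerivAt H (H' t) t) (hδ : 0 < δ) {x : ι → ℝ}
    (hsep : Pairwise fun i j => δ ≤ |x i - x j|) (hend : ∀ i, a + δ / 2 ≤ x i ∧ x i ≤ b - δ / 2) :
    ∑ i, ‖H (x i)‖ ^ 2 ≤ δ⁻¹ * (∫ t in a..b, ‖H t‖ ^ 2) + ∫ t in a..b, ‖H t‖ * ‖H' t‖ := by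
  have hsq : IntervalIntegrable (fun t => ‖H t‖ ^ 2) volume a b :=
    (hH.norm.pow 2).intervalIntegrable_of_Icc hab
  have hprod : IntervalIntegrable (fun t => ‖H t‖ * ‖H' t‖) volume a b :=
    (hH.norm.mul hH'.norm).intervalIntegrable_of_Icc hab
  have hball : ∀ i, Icc (x i - δ / 2) (x i + δ / 2) ⊆ Icc a b := fun i =>
    Icc_subset_Icc (by linarith [hend i]) (by linarith [hend i])
  have hdisj : Pairwise (Disjoint on fun i => Ioc (x i - δ / 2) (x i + δ / 2)) := fun i j hij => by
    have hij' : δ ≤ |x i - x j| := hsep hij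
    rw [← max_sub_min_eq_abs'] at hij'
    rw [Function.onFun, Ioc_disjoint_Ioc, min_add_add_right, max_sub_sub_right]
    linarith
  calc ∑ i, ‖H (x i)‖ ^ 2
      ≤ ∑ i, ∫ t in x i - δ / 2..x i + δ / 2, (δ⁻¹ * ‖H t‖ ^ 2 + ‖H t‖ * ‖H' t‖) :=
        Finset.sum_le_sum fun i _ => by
          simpa only [mul_div_cancel₀ δ two_ne_zero] using
            norm_sq_le_integral_of_hasDerivAt (half_pos hδ) (hH.mono (hball i))
              (hH'.mono (hball i)) fun t ht => hderiv t (Ioo_subset_Ioo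
                (by linarith [hend i]) (by linarith [hend i]) ht)
    _ ≤ ∫ t in a..b, (δ⁻¹ * ‖H t‖ ^ 2 + ‖H t‖ * ‖H' t‖) :=
        sum_integral_le_integral_of_pairwise_disjoint hab ((hsq.const_mul _).add hprod)
          (fun t _ => by positivity)
          (fun i => ⟨by linarith [hend i], by linarith, by linarith [hend i]⟩) hdisj
    _ = δ⁻¹ * (∫ t in a..b, ‖H t‖ ^ 2) + ∫ t in a..b, ‖H t‖ * ‖H' t‖ := by
        rw [integral_add (hsq.const_mul _) hprod, intervalIntegral.integral_const_mul]

theorem ContDiffOn.sum_norm_sq_le_of_pairwise_le_abs_sub {ι E : Type*} [Fintype ι]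
    [NormedAddCommGroup E] [InnerProductSpace ℝ E] {H : ℝ → E} {a b δ : ℝ} (hab : a < b)
    (hH : ContDiffOn ℝ 1 H (Icc a b)) (hδ : 0 < δ) {x : ι → ℝ}
    (hsep : Pairwise fun i j => δ ≤ |x i - x j|) (hend : ∀ i, a + δ / 2 ≤ x i ∧ x i ≤ b - δ / 2) :
    ∑ i, ‖H (x i)‖ ^ 2 ≤ δ⁻¹ * (∫ t in a..b, ‖H t‖ ^ 2) + ∫ t in a..b, ‖H t‖ * ‖deriv H t‖ := by
  have hderiv : ∀ t ∈ Ioo a b, HasDerivAt H (derivWithin H (Icc a b) t) t := fun t ht =>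
    (hH.differentiableOn one_ne_zero t (Ioo_subset_Icc_self ht)).hasDerivWithinAt.hasDerivAt
      (Icc_mem_nhds ht.1 ht.2)
  have hderivWithin : ∫ t in a..b, ‖H t‖ * ‖deriv H t‖
      = ∫ t in a..b, ‖H t‖ * ‖derivWithin H (Icc a b) t‖ :=
    integral_congr_Ioo_of_le hab.le fun t ht => by
      simp only [derivWithin_of_mem_nhds (Icc_mem_nhds ht.1 ht.2)]
  rw [hderivWithin]
  exact _root_.sum_norm_sq_le_of_pairwise_le_abs_sub hab.le hH.continuousOn
    (hH.continuousOn_derivWithin (uniqueDiffOn_Icc hab) le_rfl) hderiv hδ hsep hend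

theorem StrictMono.pairwise_le_abs_sub_of_le_sub_succ {M : ℕ} {x : Fin M → ℝ} {δ : ℝ}
    (hmono : StrictMono x) (hgap : ∀ i j : Fin M, (i : ℕ) + 1 = (j : ℕ) → δ ≤ x j - x i) :
    Pairwise fun i j => δ ≤ |x i - x j| := by
  intro i j hij
  wlog hlt : i < j generalizing i j
  · rw [abs_sub_comm]
    exact this hij.symm (lt_of_le_of_ne (not_lt.1 hlt) hij.symm)
  have hsucc : (i : ℕ) + 1 < M := lt_of_le_of_lt hlt j.isLt
  calc δ ≤ x ⟨i + 1, hsucc⟩ - x i := hgap _ _ rfl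
    _ ≤ x j - x i := by gcongr; exact hmono.monotone (Fin.mk_le_of_le_val hlt)
    _ ≤ |x i - x j| := abs_sub_comm (x i) (x j) ▸ le_abs_self _

/-- Gallagher-type large sieve step: for `H` C¹ on `[0,1]` and `δ`-separated points
`x₁ < ⋯ < x_M` at distance at least `δ/2` from the endpoints,
`∑ |H(xᵢ)|² ≤ (1/δ) ∫₀¹ |H|² + ∫₀¹ |H||H'|`. -/
theorem stmt12 (H : ℝ → ℂ) (hH : ContDiffOn ℝ 1 H (Set.Icc 0 1))
    (M : ℕ) (x : Fin M → ℝ) (δ : ℝ) (hδ : 0 < δ)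
    (hmono : StrictMono x)
    (hgap : ∀ i j : Fin M, (i : ℕ) + 1 = (j : ℕ) → δ ≤ x j - x i)
    (hend : ∀ i, δ / 2 ≤ x i ∧ x i ≤ 1 - δ / 2) :
    ∑ i : Fin M, ‖H (x i)‖ ^ 2
      ≤ (1 / δ) * ∫ t in (0 : ℝ)..1, ‖H t‖ ^ 2
        + ∫ t in (0 : ℝ)..1, ‖H t‖ * ‖deriv H t‖ := by
  have hsum := hH.sum_norm_sq_le_of_pairwise_le_abs_sub zero_lt_one hδ
    (hmono.pairwise_le_abs_sub_of_le_sub_succ hgap) fun i => by simpa only [zero_add] using hend i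
  have hsq : 0 ≤ ∫ t in (0 : ℝ)..1, ‖H t‖ ^ 2 :=
    integral_nonneg zero_le_one fun t _ => by positivity
  have hprod : 0 ≤ ∫ t in (0 : ℝ)..1, ‖H t‖ * ‖deriv H t‖ :=
    integral_nonneg zero_le_one fun t _ => by positivity
  have hsqi : IntervalIntegrable (fun t => ‖H t‖ ^ 2) volume 0 1 :=
    (hH.continuousOn.norm.pow 2).intervalIntegrable_of_Icc zero_le_one
  -- the body of the first `∫` extends over the `+`, so it also integrates the constant `∫ ‖H‖ ‖H'‖`
  rw [integral_add hsqi intervalIntegrable_const, intervalIntegral.integral_const, sub_zero,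
    one_smul, one_div]
  rcases Nat.eq_zero_or_pos M with rfl | hM
  · rw [Fin.sum_univ_zero]
    positivity
  · have hδinv : 1 ≤ δ⁻¹ := (one_le_inv₀ hδ).2 (by linarith [hend ⟨0, hM⟩])
    nlinarith
end

section
/- Let x = (x₁,…,x_n) have iid coordinates that are bounded by C₀ in absolute value, with mean zero and variance one. Let A ⊆ ℝⁿ be a Borel set. Then for every t > 0, P(x ∈ A) · P(d₂(x, A) ≥ t√n) ≤ 4 exp(-t⁴ n / (16 C₀⁴)). -/
/-!
Work inside the box `[-C₀, C₀]ⁿ`, which has full measure, and approximate `A` from inside by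
compact sets `K` (compactness makes the Hamming distance `h` to `K` measurable). Inside the box,
a point at Euclidean distance at least `t√n` from `K` differs from every point of `K` in at least
`u = t²n / (4C₀²)` coordinates. Changing one coordinate moves `h` by at most one, so McDiarmid's
inequality (Hoeffding's lemma applied one coordinate at a time) makes `h - E h` sub-Gaussian with
variance proxy `n / 4`. The Chernoff bounds for the tails `{h ≤ 0} ⊇ K` and `{h ≥ u}` multiply to
`exp (-u² / n)`, wherever `E h` lies relative to `0` and `u`.
-/

open MeasureTheory ProbabilityTheory Real Set
open scoped NNReal ENNReal

section Hoeffding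
variable {α : Type*} [MeasurableSpace α] {ν : Measure α} [IsProbabilityMeasure ν]

theorem integral_exp_le_of_forall_le_add {g : α → ℝ} (hg : Measurable g) {c : ℝ}
    (hc : ∀ a b, g a ≤ g b + c) :
    ∫ a, exp (g a) ∂ν ≤ exp (∫ a, g a ∂ν + c ^ 2 / 8) := by
  have := nonempty_of_isProbabilityMeasure ν
  obtain ⟨a₀⟩ := id this
  have hbdd : BddBelow (range g) := ⟨g a₀ - c, by rintro _ ⟨a, rfl⟩; linarith [hc a₀ a]⟩
  have hmem : ∀ a, g a ∈ Icc (⨅ b, g b) ((⨅ b, g b) + c) := fun a =>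
    ⟨ciInf_le hbdd a, by linarith [le_ciInf fun b => (by linarith [hc a b] : g a - c ≤ g b)]⟩
  have hmgf := (hasSubgaussianMGF_of_mem_Icc hg.aemeasurable (ae_of_all ν hmem)).mgf_le 1
  simp only [mgf, add_sub_cancel_left, one_mul, exp_sub, integral_div, NNReal.coe_pow,
    NNReal.coe_div, coe_nnnorm, norm_eq_abs, NNReal.coe_ofNat, one_pow, mul_one,
    div_le_iff₀ (exp_pos _)] at hmgf
  calc ∫ a, exp (g a) ∂ν ≤ _ := hmgf
    _ = exp (∫ a, g a ∂ν + c ^ 2 / 8) := by rw [div_pow, sq_abs, ← exp_add]; ring_nf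

end Hoeffding

section McDiarmid
variable {α : Type*} [MeasurableSpace α]

theorem measurable_fin_cons {n : ℕ} :
    Measurable fun p : α × (Fin n → α) => (Fin.cons p.1 p.2 : Fin (n + 1) → α) := by
  convert (MeasurableEquiv.piFinSuccAbove (fun _ : Fin (n + 1) => α) 0).symm.measurable
  simp [MeasurableEquiv.piFinSuccAbove_symm_apply, Fin.insertNthEquiv, Fin.insertNth_zero']

theorem integral_pi_fin_succ {n : ℕ} (μ : Fin (n + 1) → Measure α) [∀ i, SigmaFinite (μ i)]
    {F : (Fin (n + 1) → α) → ℝ} (hF : Integrable F (Measure.pi μ)) :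
    ∫ x, F x ∂Measure.pi μ =
      ∫ r, ∫ a, F (Fin.cons a r) ∂μ 0 ∂Measure.pi (fun j => μ j.succ) := by
  have e := (measurePreserving_piFinSuccAbove μ 0).symm
  rw [← e.integral_comp']
  refine (integral_prod_symm _ ((e.integrable_comp_emb
    (MeasurableEquiv.measurableEmbedding _)).2 hF)).trans ?_
  simp [MeasurableEquiv.piFinSuccAbove_symm_apply, Fin.insertNthEquiv, Fin.insertNth_zero']

theorem integrable_of_abs_le {ν : Measure α} [IsFiniteMeasure ν] {f : α → ℝ}
    (hf : Measurable f) {K : ℝ} (hK : ∀ a, |f a| ≤ K) : Integrable f ν :=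
  .of_bound hf.aestronglyMeasurable K (ae_of_all _ fun a => by simpa using hK a)

theorem abs_integral_le_of_abs_le {ν : Measure α} [IsProbabilityMeasure ν] {f : α → ℝ}
    {K : ℝ} (hK : ∀ a, |f a| ≤ K) : |∫ a, f a ∂ν| ≤ K := by
  simpa using norm_integral_le_of_norm_le_const (μ := ν) (f := f) (C := K)
    (ae_of_all _ fun a => by simpa using hK a)

theorem integral_cons_le_add {n : ℕ} (ν : Measure α) [IsProbabilityMeasure ν]
    {f : (Fin (n + 1) → α) → ℝ} (hf : Measurable f) {K : ℝ} (hK : ∀ x, |f x| ≤ K) {c : ℝ}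
    (hc : ∀ i x y, (∀ j ≠ i, x j = y j) → f x ≤ f y + c) {j : Fin n} {r r' : Fin n → α}
    (hr : ∀ k ≠ j, r k = r' k) :
    ∫ a, f (Fin.cons a r) ∂ν ≤ ∫ a, f (Fin.cons a r') ∂ν + c := by
  have hint (r : Fin n → α) : Integrable (fun a => f (Fin.cons a r)) ν :=
    integrable_of_abs_le (hf.comp (measurable_fin_cons.comp measurable_prodMk_right))
      fun a => hK _
  have hpt (a : α) : f (Fin.cons a r) ≤ f (Fin.cons a r') + c :=
    hc j.succ _ _ <| Fin.cases (fun _ => rfl) fun k hk => by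
      simpa using hr k (by rintro rfl; exact hk rfl)
  calc ∫ a, f (Fin.cons a r) ∂ν ≤ ∫ a, (f (Fin.cons a r') + c) ∂ν :=
        integral_mono (hint r) ((hint r').add (integrable_const c)) hpt
    _ = ∫ a, f (Fin.cons a r') ∂ν + c := by
        rw [integral_add (hint r') (integrable_const c), integral_const, probReal_univ, one_smul]

theorem integral_exp_le_of_boundedDifferences {n : ℕ} (μ : Fin n → Measure α)
    [∀ i, IsProbabilityMeasure (μ i)] {f : (Fin n → α) → ℝ} (hf : Measurable f) {K : ℝ}
    (hK : ∀ x, |f x| ≤ K) {c : ℝ} (hc : ∀ i x y, (∀ j ≠ i, x j = y j) → f x ≤ f y + c) :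
    ∫ x, exp (f x) ∂Measure.pi μ ≤ exp (∫ x, f x ∂Measure.pi μ + n * c ^ 2 / 8) := by
  induction n with
  | zero =>
    rw [Measure.pi_of_empty, integral_dirac, integral_dirac]
    simp
  | succ n ih =>
    set μ' := Measure.pi fun j : Fin n => μ j.succ
    have hf_cons : Measurable fun p : α × (Fin n → α) => f (Fin.cons p.1 p.2) :=
      hf.comp measurable_fin_cons
    have hf_sec (r : Fin n → α) : Measurable fun a => f (Fin.cons a r) :=
      hf_cons.comp measurable_prodMk_right
    set m : (Fin n → α) → ℝ := fun r => ∫ a, f (Fin.cons a r) ∂μ 0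
    have hm : Measurable m := hf_cons.stronglyMeasurable.integral_prod_left'.measurable
    have hmK (r : Fin n → α) : |m r| ≤ K := abs_integral_le_of_abs_le fun a => hK _
    have hsec (r : Fin n → α) : ∫ a, exp (f (Fin.cons a r)) ∂μ 0 ≤ exp (m r + c ^ 2 / 8) :=
      integral_exp_le_of_forall_le_add (hf_sec r) fun a b =>
        hc 0 _ _ (Fin.cases (fun h => absurd rfl h) fun _ _ => rfl)
    calc ∫ x, exp (f x) ∂Measure.pi μ
        = ∫ r, ∫ a, exp (f (Fin.cons a r)) ∂μ 0 ∂μ' :=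
          integral_pi_fin_succ μ (integrable_of_abs_le hf.exp (K := exp K) fun x => by
            rw [abs_exp]; exact exp_le_exp.2 (le_of_abs_le (hK x)))
      _ ≤ ∫ r, exp (m r) * exp (c ^ 2 / 8) ∂μ' := by
          refine integral_mono_of_nonneg (ae_of_all _ fun r => integral_nonneg fun a =>
            (exp_pos _).le) ((integrable_of_abs_le hm.exp (K := exp K) fun r => by
              rw [abs_exp]; exact exp_le_exp.2 (le_of_abs_le (hmK r))).mul_const _)
            (ae_of_all _ fun r => (hsec r).trans_eq (exp_add _ _))
      _ ≤ exp (∫ r, m r ∂μ' + n * c ^ 2 / 8) * exp (c ^ 2 / 8) := by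
          rw [integral_mul_const]
          exact mul_le_mul_of_nonneg_right
            (ih _ hm hmK fun j r r' hr => integral_cons_le_add (μ 0) hf hK hc hr) (exp_pos _).le
      _ = exp (∫ x, f x ∂Measure.pi μ + (n + 1 : ℕ) * c ^ 2 / 8) := by
          rw [integral_pi_fin_succ μ (integrable_of_abs_le hf hK), ← exp_add]
          congr 1
          push_cast
          ring

theorem hasSubgaussianMGF_sub_integral_of_boundedDifferences {n : ℕ} (μ : Fin n → Measure α)
    [∀ i, IsProbabilityMeasure (μ i)] {f : (Fin n → α) → ℝ} (hf : Measurable f) {K : ℝ}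
    (hK : ∀ x, |f x| ≤ K) {c : ℝ} (hc : ∀ i x y, (∀ j ≠ i, x j = y j) → f x ≤ f y + c) :
    HasSubgaussianMGF (fun x => f x - ∫ y, f y ∂Measure.pi μ) (n * c ^ 2 / 4).toNNReal
      (Measure.pi μ) where
  integrable_exp_mul t := integrable_exp_mul_of_mem_Icc (hf.sub_const _).aemeasurable
    (ae_of_all _ fun x => ⟨sub_le_sub_right (abs_le.1 (hK x)).1 _,
      sub_le_sub_right (abs_le.1 (hK x)).2 _⟩)
  mgf_le t := by
    set E := ∫ y, f y ∂Measure.pi μ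
    have htc : ∀ i x y, (∀ j ≠ i, x j = y j) → t * f x ≤ t * f y + |t| * c := by
      intro i x y hxy
      have hxy' : |f x - f y| ≤ c :=
        abs_sub_le_iff.2 ⟨by linarith [hc i x y hxy],
          by linarith [hc i y x fun j hj => (hxy j hj).symm]⟩
      nlinarith [le_abs_self (t * (f x - f y)), abs_mul t (f x - f y), abs_nonneg t]
    have htK (x : Fin n → α) : |t * f x| ≤ |t| * K := by
      rw [abs_mul]; exact mul_le_mul_of_nonneg_left (hK x) (abs_nonneg t)
    calc mgf (fun x => f x - E) (Measure.pi μ) t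
        = (∫ x, exp (t * f x) ∂Measure.pi μ) * exp (-(t * E)) := by
          simp only [mgf, mul_sub, exp_sub, div_eq_mul_inv, integral_mul_const, exp_neg]
      _ ≤ exp (t * E + n * (|t| * c) ^ 2 / 8) * exp (-(t * E)) := by
          gcongr
          simpa only [integral_const_mul] using
            integral_exp_le_of_boundedDifferences μ (hf.const_mul t) htK htc
      _ = _ := by
          rw [← exp_add, Real.coe_toNNReal _ (by positivity), mul_pow, sq_abs]
          ring_nf

end McDiarmid

section Chernoff
variable {Ω : Type*} [MeasurableSpace Ω] {μ : Measure Ω} [IsProbabilityMeasure μ] {X : Ω → ℝ}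
  {m : ℝ} {σ : ℝ≥0}

theorem measureReal_ge_le_of_hasSubgaussianMGF (h : HasSubgaussianMGF (fun ω => X ω - m) σ μ)
    (b : ℝ) : μ.real {ω | b ≤ X ω} ≤ exp (-max (b - m) 0 ^ 2 / (2 * σ)) := by
  rcases le_total (b - m) 0 with hb | hb
  · simp [max_eq_right hb]
  · rw [max_eq_left hb]
    exact (measureReal_mono fun ω (hω : b ≤ X ω) => show b - m ≤ X ω - m by linarith).trans
      (h.measure_ge_le hb)

theorem measureReal_le_le_of_hasSubgaussianMGF (h : HasSubgaussianMGF (fun ω => X ω - m) σ μ)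
    (a : ℝ) : μ.real {ω | X ω ≤ a} ≤ exp (-max (m - a) 0 ^ 2 / (2 * σ)) := by
  have hneg : HasSubgaussianMGF (fun ω => -X ω - -m) σ μ :=
    h.neg.congr (ae_of_all _ fun ω => by simp only [Pi.neg_apply]; ring)
  simpa [neg_le_neg_iff, neg_add_eq_sub] using measureReal_ge_le_of_hasSubgaussianMGF hneg (-a)

theorem measureReal_le_mul_measureReal_ge_le_of_hasSubgaussianMGF
    (h : HasSubgaussianMGF (fun ω => X ω - m) σ μ) {a b : ℝ} (hab : a ≤ b) :
    μ.real {ω | X ω ≤ a} * μ.real {ω | b ≤ X ω} ≤ exp (-(b - a) ^ 2 / (4 * σ)) := by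
  have hsplit : (b - a) ^ 2 / 2 ≤ max (m - a) 0 ^ 2 + max (b - m) 0 ^ 2 := by
    have hpq : b - a ≤ max (m - a) 0 + max (b - m) 0 := by
      linarith [le_max_left (m - a) 0, le_max_left (b - m) 0]
    nlinarith [sq_nonneg (max (m - a) 0 - max (b - m) 0),
      mul_self_le_mul_self (sub_nonneg.2 hab) hpq]
  calc μ.real {ω | X ω ≤ a} * μ.real {ω | b ≤ X ω}
      ≤ exp (-max (m - a) 0 ^ 2 / (2 * σ)) * exp (-max (b - m) 0 ^ 2 / (2 * σ)) :=
        mul_le_mul (measureReal_le_le_of_hasSubgaussianMGF h a)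
          (measureReal_ge_le_of_hasSubgaussianMGF h b) measureReal_nonneg (exp_pos _).le
    _ = exp (-((max (m - a) 0 ^ 2 + max (b - m) 0 ^ 2) / (2 * σ))) := by
        rw [← exp_add]; ring_nf
    _ ≤ exp (-(b - a) ^ 2 / (4 * σ)) := by
        rw [exp_le_exp, neg_div, neg_le_neg_iff]
        calc (b - a) ^ 2 / (4 * σ) = (b - a) ^ 2 / 2 / (2 * σ) := by ring
          _ ≤ _ := div_le_div_of_nonneg_right hsplit (by positivity)

end Chernoff

section Hamming
variable {ι : Type*} [Fintype ι] {β : ι → Type*} [∀ i, DecidableEq (β i)]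
  {s : Set (∀ i, β i)} {x y : ∀ i, β i}

-- `sInf ∅ = 0` in `ℕ`, so `infHammingDist x ∅ = 0`.
noncomputable def infHammingDist (x : ∀ i, β i) (s : Set (∀ i, β i)) : ℕ :=
  sInf (hammingDist x '' s)

theorem infHammingDist_le_hammingDist (hy : y ∈ s) : infHammingDist x s ≤ hammingDist x y :=
  Nat.sInf_le ⟨y, hy, rfl⟩

theorem exists_hammingDist_eq_infHammingDist (hs : s.Nonempty) (x : ∀ i, β i) :
    ∃ y ∈ s, hammingDist x y = infHammingDist x s :=
  Nat.sInf_mem (hs.image _)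

theorem infHammingDist_eq_zero_of_mem (hx : x ∈ s) : infHammingDist x s = 0 :=
  Nat.le_zero.1 ((infHammingDist_le_hammingDist hx).trans_eq (hammingDist_self x))

theorem hammingDist_le_one_of_forall_ne {i : ι} (h : ∀ j ≠ i, x j = y j) :
    hammingDist x y ≤ 1 :=
  (Finset.card_le_card (t := {i}) fun j hj => Finset.mem_singleton.2 <| by
    by_contra hji; exact (Finset.mem_filter.1 hj).2 (h j hji)).trans_eq (Finset.card_singleton i)

theorem infHammingDist_le_add_one (hs : s.Nonempty) {i : ι} (h : ∀ j ≠ i, x j = y j) :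
    infHammingDist x s ≤ infHammingDist y s + 1 := by
  obtain ⟨z, hz, hyz⟩ := exists_hammingDist_eq_infHammingDist hs y
  calc infHammingDist x s ≤ hammingDist x z := infHammingDist_le_hammingDist hz
    _ ≤ hammingDist x y + hammingDist y z := hammingDist_triangle x y z
    _ ≤ infHammingDist y s + 1 := by
        rw [hyz, add_comm]; gcongr; exact hammingDist_le_one_of_forall_ne h

variable [∀ i, TopologicalSpace (β i)] [∀ i, T2Space (β i)]

theorem isClosed_setOf_infHammingDist_le {K : Set (∀ i, β i)} (hK : IsCompact K) (k : ℕ) :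
    IsClosed {x | infHammingDist x K ≤ k} := by
  rcases K.eq_empty_or_nonempty with rfl | hne
  · simp [infHammingDist]
  have hlevel : {x | infHammingDist x K ≤ k} = ⋃ (S : Finset ι) (_ : S.card ≤ k),
      ((S : Set ι)ᶜ).domRestrict ⁻¹' (((S : Set ι)ᶜ).domRestrict '' K) := by
    ext x
    simp only [mem_ofPred_eq, mem_iUnion, mem_preimage, mem_image, exists_prop]
    constructor
    · intro hx
      obtain ⟨y, hy, hxy⟩ := exists_hammingDist_eq_infHammingDist hne x
      refine ⟨Finset.univ.filter fun i => x i ≠ y i, hxy.trans_le hx, y, hy, funext fun i => ?_⟩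
      simpa [eq_comm] using i.2
    · rintro ⟨S, hS, y, hy, hyx⟩
      refine (infHammingDist_le_hammingDist hy).trans
        ((Finset.card_le_card fun i hi => ?_).trans hS)
      by_contra hiS
      exact (Finset.mem_filter.1 hi).2 (congrFun hyx ⟨i, hiS⟩).symm
  rw [hlevel]
  exact isClosed_iUnion_of_finite fun S => isClosed_iUnion_of_finite fun _ =>
    (hK.image (Pi.continuous_domRestrict _)).isClosed.preimage (Pi.continuous_domRestrict _)

theorem measurable_infHammingDist [∀ i, MeasurableSpace (β i)] [OpensMeasurableSpace (∀ i, β i)]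
    {K : Set (∀ i, β i)} (hK : IsCompact K) : Measurable fun x => infHammingDist x K :=
  measurable_of_Iic fun k => (isClosed_setOf_infHammingDist_le hK k).measurableSet

end Hamming

theorem measure_mul_measure_forall_le_hammingDist_le {α : Type*} [TopologicalSpace α]
    [T2Space α] [DecidableEq α] [MeasurableSpace α] {n : ℕ} [OpensMeasurableSpace (Fin n → α)]
    (μ : Fin n → Measure α) [∀ i, IsProbabilityMeasure (μ i)] {K : Set (Fin n → α)}
    (hK : IsCompact K) {u : ℝ} (hu : 0 ≤ u) :
    Measure.pi μ K * Measure.pi μ {x | ∀ y ∈ K, u ≤ hammingDist x y} ≤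
      ENNReal.ofReal (exp (-u ^ 2 / n)) := by
  rcases K.eq_empty_or_nonempty with rfl | hne
  · simp
  set ν := Measure.pi μ
  set h : (Fin n → α) → ℝ := fun x => infHammingDist x K
  have hh : Measurable h := measurable_from_nat.comp (measurable_infHammingDist hK)
  have hhn (x : Fin n → α) : |h x| ≤ n := by
    obtain ⟨y, hy⟩ := hne
    rw [abs_of_nonneg (Nat.cast_nonneg _), ← Fintype.card_fin n, Nat.cast_le]
    exact (infHammingDist_le_hammingDist hy).trans hammingDist_le_card_fintype
  have hdiff (i : Fin n) (x y : Fin n → α) (hxy : ∀ j ≠ i, x j = y j) : h x ≤ h y + 1 := by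
    simp only [h]; exact_mod_cast infHammingDist_le_add_one hne hxy
  have htail := measureReal_le_mul_measureReal_ge_le_of_hasSubgaussianMGF
    (hasSubgaussianMGF_sub_integral_of_boundedDifferences μ hh hhn hdiff) hu
  have hK0 : K ⊆ {x | h x ≤ 0} := fun x hx => by simp [h, infHammingDist_eq_zero_of_mem hx]
  have hfar : {x | ∀ y ∈ K, u ≤ hammingDist x y} ⊆ {x | u ≤ h x} := fun x hx => by
    obtain ⟨y, hy, hxy⟩ := exists_hammingDist_eq_infHammingDist hne x
    simpa [h, ← hxy] using hx y hy
  calc ν K * ν {x | ∀ y ∈ K, u ≤ hammingDist x y} ≤ ν {x | h x ≤ 0} * ν {x | u ≤ h x} :=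
        mul_le_mul' (measure_mono hK0) (measure_mono hfar)
    _ = ENNReal.ofReal (ν.real {x | h x ≤ 0} * ν.real {x | u ≤ h x}) := by
        rw [ENNReal.ofReal_mul measureReal_nonneg, ofReal_measureReal, ofReal_measureReal]
    _ ≤ ENNReal.ofReal (exp (-u ^ 2 / n)) := by
        refine ENNReal.ofReal_le_ofReal (htail.trans_eq ?_)
        rw [Real.coe_toNNReal _ (by positivity)]
        ring_nf

theorem sum_sq_sub_le_mul_hammingDist {ι : Type*} [Fintype ι] {x y : ι → ℝ} {D : ℝ}
    (h : ∀ i, |x i - y i| ≤ D) : ∑ i, (x i - y i) ^ 2 ≤ D ^ 2 * hammingDist x y := by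
  rw [← Finset.sum_filter_of_ne (p := fun i => x i ≠ y i) fun i _ hi => by
    simpa [sub_eq_zero] using hi]
  refine (Finset.sum_le_card_nsmul _ _ (D ^ 2) fun i _ => ?_).trans_eq ?_
  · exact sq_le_sq' (abs_le.1 (h i)).1 (abs_le.1 (h i)).2
  · rw [nsmul_eq_mul, mul_comm]; rfl

theorem le_hammingDist_of_le_sqrt_sum_sq {ι : Type*} [Fintype ι] {x y : ι → ℝ} {C t N : ℝ}
    (hC : 0 < C) (ht : 0 ≤ t) (hx : ∀ i, |x i| ≤ C) (hy : ∀ i, |y i| ≤ C)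
    (h : t * √N ≤ √(∑ i, (x i - y i) ^ 2)) : t ^ 2 * N / (4 * C ^ 2) ≤ hammingDist x y := by
  have hsq : t ^ 2 * N ≤ ∑ i, (x i - y i) ^ 2 := by
    rwa [← sqrt_sq ht, ← sqrt_mul (sq_nonneg t), sqrt_le_sqrt_iff (by positivity)] at h
  have hdiff (i : ι) : |x i - y i| ≤ 2 * C := by
    linarith [abs_sub (x i) (y i), hx i, hy i]
  rw [div_le_iff₀ (by positivity)]
  nlinarith [sum_sq_sub_le_mul_hammingDist hdiff]

theorem measure_mul_le_of_forall_isCompact_subset {X : Type*} [TopologicalSpace X]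
    [MeasurableSpace X] {ν : Measure X} [ν.InnerRegular] {A : Set X} (hA : MeasurableSet A)
    {c ε : ℝ≥0∞} (h : ∀ K ⊆ A, IsCompact K → ν K * c ≤ ε) : ν A * c ≤ ε := by
  rw [hA.measure_eq_iSup_isCompact ν]
  simpa only [ENNReal.iSup_mul, iSup_le_iff] using h

theorem stmt18_general (C₀ : ℝ) (hC₀ : 0 < C₀) (μ : Measure ℝ) [IsProbabilityMeasure μ]
    (hbdd : ∀ᵐ x ∂μ, |x| ≤ C₀)
    (n : ℕ) (A : Set (Fin n → ℝ)) (hA : MeasurableSet A)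
    (t : ℝ) (ht : 0 < t) :
    Measure.pi (fun _ : Fin n => μ) A *
        Measure.pi (fun _ : Fin n => μ)
          {x : Fin n → ℝ | ∀ y ∈ A,
            t * Real.sqrt n ≤ Real.sqrt (∑ i : Fin n, (x i - y i) ^ 2)}
      ≤ ENNReal.ofReal (4 * Real.exp (-(t ^ 4 * n) / (16 * C₀ ^ 4))) := by
  set ν := Measure.pi fun _ : Fin n => μ
  set B := {x : Fin n → ℝ | ∀ y ∈ A, t * √n ≤ √(∑ i : Fin n, (x i - y i) ^ 2)}
  set box := {x : Fin n → ℝ | ∀ i, |x i| ≤ C₀}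
  set u := t ^ 2 * n / (4 * C₀ ^ 2)
  have hbox : ν boxᶜ = 0 := ae_iff.1 <| Filter.eventually_all.2 fun i =>
    (Measure.quasiMeasurePreserving_eval (fun _ : Fin n => μ) i).ae hbdd
  have hbox_closed : IsClosed box := by
    simp only [box, ofPred_forall]
    exact isClosed_iInter fun i => isClosed_le (by fun_prop) continuous_const
  refine (measure_mul_le_of_forall_isCompact_subset hA fun K hKA hK => ?_).trans
    (ENNReal.ofReal_le_ofReal (le_mul_of_one_le_left (exp_pos _).le (by norm_num)))
  calc ν K * ν B = ν (K ∩ box) * ν (B ∩ box) := by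
        rw [measure_inter_conull hbox, measure_inter_conull hbox]
    _ ≤ ν (K ∩ box) * ν {x | ∀ y ∈ K ∩ box, u ≤ hammingDist x y} := by
        gcongr
        rintro x ⟨hxB, hxbox⟩ y ⟨hyK, hybox⟩
        exact le_hammingDist_of_le_sqrt_sum_sq hC₀ ht.le hxbox hybox (hxB y (hKA hyK))
    _ ≤ ENNReal.ofReal (exp (-u ^ 2 / n)) :=
        measure_mul_measure_forall_le_hammingDist_le _ (hK.inter_right hbox_closed) (by positivity)
    _ = ENNReal.ofReal (exp (-(t ^ 4 * n) / (16 * C₀ ^ 4))) := by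
        rcases eq_or_ne (n : ℝ) 0 with hn | hn
        · simp [u, hn]
        · congr 2; simp only [u]; field_simp; ring

/-- Talagrand/McDiarmid-type concentration for bounded iid coordinates: if `μ` is the law
of a variable bounded by `C₀`, with mean zero and variance one, and `A ⊆ ℝⁿ` is Borel,
then `P(x ∈ A) · P(d₂(x,A) ≥ t√n) ≤ 4 exp(-t⁴n/(16C₀⁴))` under the product measure. -/
theorem stmt18 (C₀ : ℝ) (hC₀ : 0 < C₀) (μ : Measure ℝ) [IsProbabilityMeasure μ]
    (hbdd : ∀ᵐ x ∂μ, |x| ≤ C₀)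
    (hmean : ∫ x, x ∂μ = 0) (hvar : ∫ x, x ^ 2 ∂μ = 1)
    (n : ℕ) (hn : 0 < n) (A : Set (Fin n → ℝ)) (hA : MeasurableSet A)
    (t : ℝ) (ht : 0 < t) :
    Measure.pi (fun _ : Fin n => μ) A *
        Measure.pi (fun _ : Fin n => μ)
          {x : Fin n → ℝ | ∀ y ∈ A,
            t * Real.sqrt n ≤ Real.sqrt (∑ i : Fin n, (x i - y i) ^ 2)}
      ≤ ENNReal.ofReal (4 * Real.exp (-(t ^ 4 * n) / (16 * C₀ ^ 4))) :=
  stmt18_general C₀ hC₀ μ hbdd n A hA t ht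
end
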